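/- arXiv:funct-an/9608001 — 8 statements merged into one kernel-verified Lean document; each statement's English description precedes it below -/
import Mathlib

section
/- Let X be a compact Hausdorff space and let μ be a diffuse regular Borel probability measure on X. For ε > 0 let Y_ε = { f ∈ C(X, ℝ) : μ(f⁻¹({t})) < ε for every t ∈ ℝ }. Then for every ε > 0 the set Y_ε is open and dense in C(X, ℝ) with respect to the uniform (sup-norm) topology; consequently Y = { f ∈ C(X, ℝ) : μ(f⁻¹({t})) = 0 for every t ∈ ℝ } is a dense G_δ subset of C(X, ℝ), and in particular nonempty. -/
/-!
For `g : X → ℝ` let `D(g) = (μ ⊗ μ) {(x, y) | g x = g y}`; every level set `L` of `g` satisfies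
`μ(L)² ≤ D(g)`, since `L ×ˢ L` lies in the coincidence set. Outer regularity and diffuseness give
every point a neighbourhood of measure `< δ`, and finitely many Urysohn functions `Wᵢ` supported
in such neighbourhoods make the joint coincidence set of `W` have measure `≤ δ`. If `W` separates
`x` and `y`, the `c` for which `f + ∑ cᵢ Wᵢ` does not separate them form an affine hyperplane, so
by Fubini `D(f + ∑ cᵢ Wᵢ) ≤ δ` for almost every `c`, in particular for arbitrarily small `c`:
this is the density of `Y_ε`. Openness comes from a uniform bound `μ(f⁻¹ [t - δ, t + δ]) < ε`,
obtained by compactness of the range of `f`, and Baire's theorem applies to `Y = ⋂ₙ Y_{1/n}`.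
-/

open MeasureTheory Set
open scoped ENNReal

theorem addHaar_setOf_add_dotProduct_eq_zero {ι : Type*} [Fintype ι]
    (μ : Measure (ι → ℝ)) [μ.IsAddHaarMeasure] {a : ι → ℝ} (ha : a ≠ 0) (b : ℝ) :
    μ {c | b + a ⬝ᵥ c = 0} = 0 := by
  rcases eq_empty_or_nonempty {c | b + a ⬝ᵥ c = 0} with h | ⟨c₀, hc₀⟩
  · rw [h, measure_empty]
  let L : (ι → ℝ) →ₗ[ℝ] ℝ := dotProductBilin ℝ ℝ a
  have hL : LinearMap.ker L ≠ ⊤ := fun h =>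
    ha (dotProduct_self_eq_zero.1 (LinearMap.ker_eq_top.1 h ▸ rfl : L a = 0))
  have hset : {c | b + a ⬝ᵥ c = 0} = (fun c => c + -c₀) ⁻¹' (LinearMap.ker L) := by
    ext c
    simp only [mem_ofPred_eq] at hc₀
    simp only [mem_ofPred_eq, mem_preimage, SetLike.mem_coe, LinearMap.mem_ker, L,
      dotProductBilin_apply_apply, dotProduct_add, dotProduct_neg]
    constructor <;> intro h <;> linarith
  rw [hset, measure_preimage_add_right]
  exact Measure.addHaar_submodule μ _ hL

theorem ae_measure_setOf_add_dotProduct_eq_zero {Z ι : Type*} [MeasurableSpace Z] [Fintype ι]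
    (ρ : Measure Z) [SFinite ρ] {F : Z → ℝ} {A : Z → ι → ℝ} (hF : Measurable F)
    (hA : Measurable A) :
    ∀ᵐ c : ι → ℝ, ρ {z | F z + A z ⬝ᵥ c = 0 ∧ A z ≠ 0} = 0 := by
  let E : Set ((ι → ℝ) × Z) := {q | F q.2 + A q.2 ⬝ᵥ q.1 = 0 ∧ A q.2 ≠ 0}
  have hE : MeasurableSet E := by
    refine (measurableSet_eq_fun ?_ measurable_const).inter
      ((measurableSet_singleton 0).compl.preimage (hA.comp measurable_snd))
    unfold dotProduct
    fun_prop
  have hslice (z : Z) : volume ((fun c => (c, z)) ⁻¹' E) = 0 := by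
    by_cases hz : A z = 0
    · simp [E, hz]
    · simpa [E, hz] using addHaar_setOf_add_dotProduct_eq_zero volume hz (F z)
  have hnull : (volume.prod ρ) E = 0 := by
    simp [Measure.prod_apply_symm hE, hslice]
  exact Measure.measure_ae_null_of_prod_null hnull

theorem ae_measure_prod_setOf_add_sum_smul_eq_le {X ι : Type*} [TopologicalSpace X]
    [MeasurableSpace X] [OpensMeasurableSpace X] [Fintype ι] (μ : Measure X) [SFinite μ]
    (f : C(X, ℝ)) (W : ι → C(X, ℝ)) :
    ∀ᵐ c : ι → ℝ, (μ.prod μ) {p | (f + ∑ i, c i • W i) p.1 = (f + ∑ i, c i • W i) p.2} ≤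
      (μ.prod μ) {p | ∀ i, W i p.1 = W i p.2} := by
  filter_upwards [ae_measure_setOf_add_dotProduct_eq_zero (μ.prod μ)
    (F := fun p => f p.1 - f p.2) (A := fun p i => W i p.1 - W i p.2) (by fun_prop)
    (measurable_pi_lambda _ fun i => by fun_prop)] with c hc
  have hsub : {p : X × X | (f + ∑ i, c i • W i) p.1 = (f + ∑ i, c i • W i) p.2} ⊆
      {p | f p.1 - f p.2 + (fun i => W i p.1 - W i p.2) ⬝ᵥ c = 0 ∧
        (fun i => W i p.1 - W i p.2) ≠ 0} ∪ {p | ∀ i, W i p.1 = W i p.2} := by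
    intro p hp
    by_cases hW : ∀ i, W i p.1 = W i p.2
    · exact Or.inr hW
    refine Or.inl ⟨?_, fun h => hW fun i => sub_eq_zero.1 (congr_fun h i)⟩
    simp only [mem_ofPred_eq, ContinuousMap.add_apply, ContinuousMap.coe_sum,
      Finset.sum_apply, ContinuousMap.coe_smul, Pi.smul_apply, smul_eq_mul] at hp
    simp only [dotProduct, sub_mul, Finset.sum_sub_distrib]
    simp only [mul_comm (W _ _)]
    linarith
  calc _ ≤ _ := measure_mono hsub
    _ ≤ _ := measure_union_le _ _
    _ = _ := by rw [hc, zero_add]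

theorem exists_finset_measure_setOf_forall_eq_lt {X : Type*} [TopologicalSpace X]
    [CompactSpace X] [NormalSpace X] [T1Space X] [MeasurableSpace X] (μ : Measure X)
    [μ.OuterRegular] (hdiffuse : ∀ x : X, μ {x} = 0) {δ : ℝ≥0∞} (hδ : 0 < δ) :
    ∃ (s : Finset X) (W : s → C(X, ℝ)), ∀ x, μ {y | ∀ i, W i x = W i y} < δ := by
  have hU (x : X) : ∃ U ⊇ {x}, IsOpen U ∧ μ U < δ :=
    Set.exists_isOpen_lt_of_lt _ _ (by rwa [hdiffuse])
  choose U hxU hUo hUμ using hU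
  have hφ (x : X) : ∃ φ : C(X, ℝ), EqOn φ 0 (U x)ᶜ ∧ EqOn φ 1 {x} ∧ ∀ y, φ y ∈ Icc (0 : ℝ) 1 :=
    exists_continuous_zero_one_of_isClosed (hUo x).isClosed_compl isClosed_singleton
      (disjoint_compl_left.mono_right (hxU x))
  choose φ hφU hφx _ using hφ
  obtain ⟨s, hs⟩ := CompactSpace.elim_nhds_subcover (fun x => {y | φ x y ≠ 0}) fun x =>
    (isOpen_ne_fun (φ x).continuous continuous_const).mem_nhds (by simp [hφx x rfl])
  refine ⟨s, fun i => φ i, fun y => ?_⟩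
  obtain ⟨x, hxs, hy⟩ : ∃ x ∈ s, φ x y ≠ 0 := by simpa using hs.ge (mem_univ y)
  refine (measure_mono fun z hz => ?_).trans_lt (hUμ x)
  by_contra hzU
  exact hy ((hz ⟨x, hxs⟩).trans (hφU x hzU))

theorem measure_preimage_singleton_mul_self_le {X Y : Type*} [MeasurableSpace X]
    (μ : Measure X) [SFinite μ] (g : X → Y) (t : Y) :
    μ (g ⁻¹' {t}) * μ (g ⁻¹' {t}) ≤ (μ.prod μ) {p | g p.1 = g p.2} := by
  rw [← Measure.prod_prod]
  refine measure_mono ?_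
  rintro p ⟨h1, h2⟩
  exact h1.trans h2.symm

theorem exists_pos_forall_measure_closedBall_lt {α : Type*} [MetricSpace α] [MeasurableSpace α]
    [OpensMeasurableSpace α] (ν : Measure α) [IsFiniteMeasure ν] {K : Set α} (hK : IsCompact K)
    (hKν : ν Kᶜ = 0) {ε : ℝ≥0∞} (hε : 0 < ε) (h : ∀ x ∈ K, ν {x} < ε) :
    ∃ δ > 0, ∀ x, ν (Metric.closedBall x δ) < ε := by
  have hr (x : α) (hx : x ∈ K) : ∃ r > 0, ν (Metric.closedBall x r) < ε := by
    have hlim := tendsto_measure_cthickening_of_isClosed (μ := ν)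
      ⟨1, one_pos, measure_ne_top _ _⟩ (isClosed_singleton (x := x))
    obtain ⟨r, hr, hr0⟩ := ((hlim.eventually (gt_mem_nhds (h x hx))).filter_mono
      nhdsWithin_le_nhds |>.and (self_mem_nhdsWithin (s := Ioi (0 : ℝ)))).exists
    exact ⟨r, hr0, by rwa [← Metric.cthickening_singleton x (le_of_lt hr0)]⟩
  choose! r hr0 hrε using hr
  obtain ⟨δ, hδ, hleb⟩ := lebesgue_number_lemma_of_metric (s := K)
    (c := fun x : K => Metric.ball (x : α) (r x)) hK (fun _ => Metric.isOpen_ball)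
    (fun x hx => mem_iUnion.2 ⟨⟨x, hx⟩, Metric.mem_ball_self (hr0 x hx)⟩)
  refine ⟨δ / 3, by positivity, fun t => ?_⟩
  by_cases hKt : ∃ y ∈ K, dist t y ≤ δ / 3
  · obtain ⟨y, hyK, hty⟩ := hKt
    obtain ⟨x, hx⟩ := hleb y hyK
    refine (measure_mono fun z hz => Metric.ball_subset_closedBall (hx ?_)).trans_lt (hrε x x.2)
    rw [Metric.mem_closedBall] at hz
    rw [Metric.mem_ball]
    linarith [dist_triangle z t y]
  · push Not at hKt
    refine (measure_mono fun z hz hzK => (hKt z hzK).not_ge ?_).trans_lt (hKν ▸ hε)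
    rwa [dist_comm]

theorem isOpen_setOf_forall_measure_preimage_singleton_lt {X : Type*} [TopologicalSpace X]
    [CompactSpace X] [MeasurableSpace X] [OpensMeasurableSpace X] (μ : Measure X)
    [IsFiniteMeasure μ] {ε : ℝ≥0∞} (hε : 0 < ε) :
    IsOpen {f : C(X, ℝ) | ∀ t : ℝ, μ (f ⁻¹' {t}) < ε} := by
  refine Metric.isOpen_iff.2 fun f hf => ?_
  have hmap {s : Set ℝ} (hs : MeasurableSet s) : μ.map f s = μ (f ⁻¹' s) :=
    Measure.map_apply f.continuous.measurable hs
  have hK := isCompact_range f.continuous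
  obtain ⟨δ, hδ, hball⟩ := exists_pos_forall_measure_closedBall_lt (μ.map f) hK
    (by simp [hmap hK.isClosed.measurableSet.compl]) hε
    (fun t _ => by simpa [hmap (measurableSet_singleton t)] using hf t)
  refine ⟨δ, hδ, fun g hg t => ?_⟩
  calc μ (g ⁻¹' {t}) ≤ μ (f ⁻¹' Metric.closedBall t δ) := measure_mono fun x hx => ?_
    _ = μ.map f (Metric.closedBall t δ) := (hmap Metric.isClosed_closedBall.measurableSet).symm
    _ < ε := hball t
  rw [mem_preimage, mem_singleton_iff] at hx
  rw [mem_preimage, Metric.mem_closedBall, ← hx, dist_comm]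
  exact (ContinuousMap.dist_apply_le_dist x).trans (Metric.mem_ball.1 hg).le

theorem dense_setOf_forall_measure_preimage_singleton_lt {X : Type*} [TopologicalSpace X]
    [CompactSpace X] [NormalSpace X] [T1Space X] [MeasurableSpace X] [OpensMeasurableSpace X]
    (μ : Measure X) [IsProbabilityMeasure μ] [μ.OuterRegular] (hdiffuse : ∀ x : X, μ {x} = 0)
    {ε : ℝ≥0∞} (hε : 0 < ε) :
    Dense {f : C(X, ℝ) | ∀ t : ℝ, μ (f ⁻¹' {t}) < ε} := by
  obtain ⟨δ, hδ, hδε⟩ := exists_between (ENNReal.mul_pos hε.ne' hε.ne')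
  obtain ⟨s, W, hW⟩ := exists_finset_measure_setOf_forall_eq_lt μ hdiffuse hδ
  have hWδ : (μ.prod μ) {p | ∀ i, W i p.1 = W i p.2} ≤ δ := by
    have hmeas : MeasurableSet {p : X × X | ∀ i, W i p.1 = W i p.2} := by
      simp only [ofPred_forall]
      exact MeasurableSet.iInter fun i => measurableSet_eq_fun (by fun_prop) (by fun_prop)
    calc _ = ∫⁻ x, μ {y | ∀ i, W i x = W i y} ∂μ := Measure.prod_apply hmeas
      _ ≤ ∫⁻ _, δ ∂μ := lintegral_mono fun x => (hW x).le
      _ = δ := by simp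
  refine Metric.dense_iff.2 fun f η hη => ?_
  let G : (s → ℝ) → C(X, ℝ) := fun c => f + ∑ i, c i • W i
  have hG : Continuous G := by fun_prop
  have hO : volume (G ⁻¹' Metric.ball f η) ≠ 0 :=
    (Metric.isOpen_ball.preimage hG).measure_ne_zero volume ⟨0, by simpa [G]⟩
  obtain ⟨c, hc, hcW⟩ := Measure.exists_mem_of_measure_ne_zero_of_ae hO
    (ae_restrict_of_ae (ae_measure_prod_setOf_add_sum_smul_eq_le μ f W))
  refine ⟨G c, hc, fun t => ?_⟩
  by_contra! hle
  have hsq : ε * ε ≤ δ := calc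
    ε * ε ≤ μ (G c ⁻¹' {t}) * μ (G c ⁻¹' {t}) := mul_le_mul' hle hle
    _ ≤ _ := measure_preimage_singleton_mul_self_le μ (G c) t
    _ ≤ _ := hcW
    _ ≤ δ := hWδ
  exact (hsq.trans_lt hδε).false

/-- For a diffuse regular Borel probability measure `μ` on a compact Hausdorff space `X`,
each set `Y_ε = {f ∈ C(X,ℝ) : μ(f⁻¹{t}) < ε for all t}` is open and dense in `C(X,ℝ)`,
and consequently `Y = {f : μ(f⁻¹{t}) = 0 for all t}` is a dense Gδ set, in particular
nonempty. -/
theorem level_sets_null_dense_Gdelta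
    (X : Type*) [TopologicalSpace X] [CompactSpace X] [T2Space X]
    [MeasurableSpace X] [BorelSpace X]
    (μ : Measure X) [IsProbabilityMeasure μ] [μ.Regular]
    (hdiffuse : ∀ x : X, μ {x} = 0) :
    (∀ ε : ℝ≥0∞, 0 < ε →
        IsOpen {f : C(X, ℝ) | ∀ t : ℝ, μ (⇑f ⁻¹' {t}) < ε} ∧
        Dense {f : C(X, ℝ) | ∀ t : ℝ, μ (⇑f ⁻¹' {t}) < ε}) ∧
      IsGδ {f : C(X, ℝ) | ∀ t : ℝ, μ (⇑f ⁻¹' {t}) = 0} ∧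
      Dense {f : C(X, ℝ) | ∀ t : ℝ, μ (⇑f ⁻¹' {t}) = 0} ∧
      {f : C(X, ℝ) | ∀ t : ℝ, μ (⇑f ⁻¹' {t}) = 0}.Nonempty := by
  have hOD (ε : ℝ≥0∞) (hε : 0 < ε) :
      IsOpen {f : C(X, ℝ) | ∀ t : ℝ, μ (f ⁻¹' {t}) < ε} ∧
        Dense {f : C(X, ℝ) | ∀ t : ℝ, μ (f ⁻¹' {t}) < ε} :=
    ⟨isOpen_setOf_forall_measure_preimage_singleton_lt μ hε,
      dense_setOf_forall_measure_preimage_singleton_lt μ hdiffuse hε⟩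
  have hinv (n : ℕ) : 0 < (n : ℝ≥0∞)⁻¹ := ENNReal.inv_pos.2 (ENNReal.natCast_ne_top n)
  have hY : {f : C(X, ℝ) | ∀ t : ℝ, μ (f ⁻¹' {t}) = 0} =
      ⋂ n : ℕ, {f : C(X, ℝ) | ∀ t : ℝ, μ (f ⁻¹' {t}) < (n : ℝ≥0∞)⁻¹} := by
    ext f
    simp only [mem_ofPred_eq, mem_iInter]
    refine ⟨fun h n t => h t ▸ hinv n, fun h t => by_contra fun h0 => ?_⟩
    obtain ⟨n, hn⟩ := ENNReal.exists_inv_nat_lt h0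
    exact (h n t).not_gt hn
  have hdense :=
    hY ▸ dense_iInter_of_isOpen (fun n => (hOD _ (hinv n)).1) fun n => (hOD _ (hinv n)).2
  exact ⟨hOD, hY ▸ IsGδ.iInter_of_isOpen fun n => (hOD _ (hinv n)).1, hdense, hdense.nonempty⟩
end

section
/- Let X be a compact Hausdorff space and let μ be a diffuse regular Borel probability measure on X. Then there exists a continuous function h : X → [0,1] such that for every Borel subset E of [0,1] one has μ(h⁻¹(E)) = m(E), where m is Lebesgue measure on [0,1]; that is, the pushforward of μ under h is Lebesgue measure on [0,1]. -/
open MeasureTheory Set Filter Topology ENNReal NNReal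

namespace DiffusePush

variable {X : Type*} [TopologicalSpace X]

lemma ennreal_kit (a : ℝ≥0∞) (ha : a ≠ ∞) (h0 : a ≠ 0) :
    a/8 < a/4 ∧ a/4 < a ∧ a/8 + a/2 ≤ 7/8*a ∧ 7/8*a + a/8 = a ∧ 2*(a/4) = a/2 := by
  lift a to ℝ≥0 using ha
  have h0' : a ≠ 0 := by simpa using h0
  have hx : 0 < (a:ℝ) := by positivity
  have h8 : ((8:ℝ≥0):ℝ≥0∞) = (8:ℝ≥0∞) := by norm_num
  have h4 : ((4:ℝ≥0):ℝ≥0∞) = (4:ℝ≥0∞) := by norm_num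
  have h2 : ((2:ℝ≥0):ℝ≥0∞) = (2:ℝ≥0∞) := by norm_num
  have h7 : ((7:ℝ≥0):ℝ≥0∞) = (7:ℝ≥0∞) := by norm_num
  refine ⟨?_, ?_, ?_, ?_, ?_⟩ <;>
    simp only [← h8, ← h4, ← h2, ← h7, ← ENNReal.coe_div (by norm_num : (8:ℝ≥0) ≠ 0),
      ← ENNReal.coe_div (by norm_num : (4:ℝ≥0) ≠ 0),
      ← ENNReal.coe_div (by norm_num : (2:ℝ≥0) ≠ 0),
      ← ENNReal.coe_mul, ← ENNReal.coe_add,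
      ENNReal.coe_lt_coe, ENNReal.coe_le_coe, ENNReal.coe_inj]
  · rw [← NNReal.coe_lt_coe]; push_cast; linarith
  · rw [← NNReal.coe_lt_coe]; push_cast; linarith
  · rw [← NNReal.coe_le_coe]; push_cast; linarith
  · rw [← NNReal.coe_inj]; push_cast; ring
  · rw [← NNReal.coe_inj]; push_cast; ring

/-- A separating open set with null boundary. -/
lemma exists_sep_null_boundary [NormalSpace X] [MeasurableSpace X] [OpensMeasurableSpace X]
    (μ : Measure X) [IsFiniteMeasure μ] {c u : Set X} (hc : IsClosed c) (hu : IsOpen u)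
    (hcu : c ⊆ u) :
    ∃ v : Set X, IsOpen v ∧ c ⊆ v ∧ closure v ⊆ u ∧ μ (closure v \ v) = 0 := by
  obtain ⟨f, hf0, hf1, hf01⟩ := exists_continuous_zero_one_of_isClosed hc hu.isClosed_compl
    (Set.disjoint_left.mpr fun x hx hxc => hxc (hcu hx))
  set T : Set ℝ := {t : ℝ | 0 < μ {a | f a = t}} with hT
  have hTc : T.Countable := Measure.countable_meas_level_set_pos f.continuous.measurable
  have hsub : ¬ (Ioo (0:ℝ) 1 ⊆ T) := by
    intro h
    have h1 : volume (Ioo (0:ℝ) 1) ≤ volume T := measure_mono h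
    rw [hTc.measure_zero] at h1
    simp [Real.volume_Ioo] at h1
  obtain ⟨s, hs, hsT⟩ := not_subset.mp hsub
  have hμs : μ {a | f a = s} = 0 := by
    by_contra h
    exact hsT (pos_iff_ne_zero.mpr h)
  refine ⟨f ⁻¹' Iio s, (isOpen_Iio).preimage f.continuous, ?_, ?_, ?_⟩
  · intro x hx
    have : f x = 0 := hf0 hx
    simp [Set.mem_preimage, this, hs.1]
  · have h1 : closure (f ⁻¹' Iio s) ⊆ f ⁻¹' Iic s :=
      closure_minimal (preimage_mono Iio_subset_Iic_self) ((isClosed_Iic).preimage f.continuous)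
    intro x hx
    by_contra hxu
    have he : f x = 1 := hf1 hxu
    have hle := h1 hx
    simp only [Set.mem_preimage, Set.mem_Iic, he] at hle
    linarith [hs.2]
  · refine measure_mono_null (fun x hx => ?_) hμs
    have h1 : closure (f ⁻¹' Iio s) ⊆ f ⁻¹' Iic s :=
      closure_minimal (preimage_mono Iio_subset_Iic_self) ((isClosed_Iic).preimage f.continuous)
    have h2 := h1 hx.1
    have h3 : ¬ f x < s := hx.2
    simp only [Set.mem_preimage, Set.mem_Iic] at h2
    exact le_antisymm h2 (not_lt.mp h3)

/-- Discrete intermediate value over a list of small open sets. -/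
lemma list_ivt [MeasurableSpace X] (μ : Measure X) (K : Set X) (b : ℝ≥0∞) :
    ∀ L : List (Set X), (∀ U ∈ L, IsOpen U ∧ μ U ≤ b) →
    ∀ W : Set X, IsOpen W → μ (K ∩ W) < b → b ≤ μ (K ∩ (W ∪ ⋃ U ∈ L, U)) →
    ∃ V : Set X, IsOpen V ∧ b ≤ μ (K ∩ V) ∧ μ (K ∩ V) ≤ 2 * b := by
  intro L
  induction L with
  | nil =>
    intro _ W _ hlt hge
    simp only [List.not_mem_nil, Set.iUnion_of_empty, Set.iUnion_empty, Set.union_empty] at hge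
    · exact absurd hge (not_le.mpr hlt)
  | cons U L ih =>
    intro hL W hW hlt hge
    by_cases h : b ≤ μ (K ∩ (W ∪ U))
    · refine ⟨W ∪ U, hW.union (hL U List.mem_cons_self).1, h, ?_⟩
      have h1 : K ∩ (W ∪ U) ⊆ (K ∩ W) ∪ (K ∩ U) := by rw [Set.inter_union_distrib_left]
      calc μ (K ∩ (W ∪ U)) ≤ μ (K ∩ W) + μ (K ∩ U) :=
            le_trans (measure_mono h1) (measure_union_le _ _)
        _ ≤ b + b := add_le_add hlt.le (le_trans (measure_mono Set.inter_subset_right)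
            (hL U List.mem_cons_self).2)
        _ = 2 * b := (two_mul b).symm
    · refine ih (fun V hV => hL V (List.mem_cons_of_mem U hV)) (W ∪ U)
        (hW.union (hL U List.mem_cons_self).1) (not_le.mp h) ?_
      have : W ∪ U ∪ ⋃ V ∈ L, V = W ∪ ⋃ V ∈ U :: L, V := by
        simp only [List.mem_cons, Set.iUnion_iUnion_eq_or_left, Set.union_assoc]
      rw [this]
      exact hge

end DiffusePush

namespace DiffusePush

variable {X : Type*} [TopologicalSpace X] [CompactSpace X] [T2Space X]
  [MeasurableSpace X] [BorelSpace X]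

lemma exists_compact_window (μ : Measure X) [IsFiniteMeasure μ] [μ.Regular] [NullSingletonClass μ]
    {A : Set X} (hA : MeasurableSet A) (h0 : μ A ≠ 0) :
    ∃ K : Set X, IsCompact K ∧ K ⊆ A ∧ μ A / 8 < μ K ∧ μ K ≤ μ A / 2 := by
  have hfin : μ A ≠ ∞ := measure_ne_top μ A
  obtain ⟨k84, k4a, _, _, k24⟩ := ennreal_kit (μ A) hfin h0
  obtain ⟨K₀, hK₀A, hK₀c, hK₀⟩ := hA.exists_lt_isCompact_of_ne_top hfin k4a
  have hpos : (0:ℝ≥0∞) < μ A / 4 := zero_le.trans_lt k84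
  have hcov : ∀ x : K₀, ∃ U : Set X, IsOpen U ∧ (x:X) ∈ U ∧ μ U ≤ μ A / 4 := by
    intro x
    have h1 : μ {(x:X)} < μ A / 4 := by rw [measure_singleton]; exact hpos
    obtain ⟨U, hU, hUo, hμU⟩ := Set.exists_isOpen_lt_of_lt {(x:X)} (μ A / 4) h1
    exact ⟨U, hUo, hU rfl, hμU.le⟩
  choose U hUo hUx hUμ using hcov
  have hcover : K₀ ⊆ ⋃ i : K₀, U i := fun x hx => Set.mem_iUnion.mpr ⟨⟨x, hx⟩, hUx _⟩
  obtain ⟨t, ht⟩ := hK₀c.elim_finite_subcover U hUo hcover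
  set L : List (Set X) := t.toList.map U with hL
  have hLprop : ∀ V ∈ L, IsOpen V ∧ μ V ≤ μ A / 4 := by
    intro V hV
    simp only [hL, List.mem_map, Finset.mem_toList] at hV
    obtain ⟨i, _, rfl⟩ := hV
    exact ⟨hUo i, hUμ i⟩
  have hK₀sub : K₀ ⊆ ⋃ V ∈ L, V := by
    intro x hx
    obtain ⟨i, hi⟩ := Set.mem_iUnion.mp (ht hx)
    obtain ⟨hit, hxi⟩ := Set.mem_iUnion.mp hi
    exact Set.mem_biUnion (show U i ∈ L by
      simp only [hL, List.mem_map]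
      exact ⟨i, Finset.mem_toList.mpr hit, rfl⟩) hxi
  obtain ⟨V, hVo, hV1, hV2⟩ := list_ivt μ K₀ (μ A / 4) L hLprop ∅ isOpen_empty
    (by simpa using hpos)
    (by rw [Set.empty_union, Set.inter_eq_self_of_subset_left hK₀sub]; exact hK₀.le)
  have hm : MeasurableSet (K₀ ∩ V) := hK₀c.isClosed.measurableSet.inter hVo.measurableSet
  obtain ⟨K, hKsub, hKc, hK⟩ := hm.exists_lt_isCompact_of_ne_top (measure_ne_top μ _)
    (lt_of_lt_of_le k84 hV1)
  exact ⟨K, hKc, hKsub.trans (Set.inter_subset_left.trans hK₀A), hK,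
    le_trans (measure_mono hKsub) (hV2.trans_eq k24)⟩

lemma exists_split (μ : Measure X) [IsFiniteMeasure μ] [μ.Regular] [NullSingletonClass μ]
    {c u : Set X} (hc : IsClosed c) (hu : IsOpen u) (hcu : c ⊆ u) :
    ∃ v : Set X, IsOpen v ∧ c ⊆ v ∧ closure v ⊆ u ∧ μ (closure v \ v) = 0 ∧
      μ (closure v \ c) ≤ 7/8 * μ (u \ c) ∧ μ (u \ v) ≤ 7/8 * μ (u \ c) := by
  rcases eq_or_ne (μ (u \ c)) 0 with h0 | h0
  · obtain ⟨v, hvo, hcv, hvu, hbd⟩ := exists_sep_null_boundary μ hc hu hcu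
    refine ⟨v, hvo, hcv, hvu, hbd, ?_, ?_⟩
    · calc μ (closure v \ c) ≤ μ (u \ c) := measure_mono (Set.diff_subset_diff_left hvu)
        _ = 0 := h0
        _ ≤ 7/8 * μ (u \ c) := zero_le
    · calc μ (u \ v) ≤ μ (u \ c) := measure_mono (Set.diff_subset_diff_right hcv)
        _ = 0 := h0
        _ ≤ 7/8 * μ (u \ c) := zero_le
  · set a := μ (u \ c) with ha
    have hfin : a ≠ ∞ := measure_ne_top μ _
    obtain ⟨k84, _, k87, keq, _⟩ := ennreal_kit a hfin h0
    have hAm : MeasurableSet (u \ c) := hu.measurableSet.diff hc.measurableSet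
    obtain ⟨C₁, hC₁c, hC₁A, hC₁l, hC₁u⟩ := exists_compact_window μ hAm h0
    set K' := c ∪ C₁ with hK'
    have hK'c : IsClosed K' := hc.union hC₁c.isClosed
    have hK'u : K' ⊆ u := Set.union_subset hcu (hC₁A.trans Set.diff_subset)
    have h80 : a / 8 ≠ 0 := by
      simp only [ne_eq, ENNReal.div_eq_zero_iff, not_or]
      exact ⟨h0, by norm_num⟩
    have h2 : μ K' < μ K' + a/8 := ENNReal.lt_add_right (measure_ne_top μ _) h80
    obtain ⟨w', hw'sup, hw'o, hw'μ⟩ := Set.exists_isOpen_lt_of_lt K' (μ K' + a/8) h2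
    set w := w' ∩ u with hw
    have hwo : IsOpen w := hw'o.inter hu
    have hK'w : K' ⊆ w := Set.subset_inter hw'sup hK'u
    obtain ⟨v, hvo, hK'v, hvw, hbd⟩ := exists_sep_null_boundary μ hK'c hwo hK'w
    have hcv : c ⊆ v := Set.subset_union_left.trans hK'v
    have hvu : closure v ⊆ u := hvw.trans Set.inter_subset_right
    have hdisj : Disjoint c C₁ := by
      rw [Set.disjoint_left]
      intro x hx hx2
      exact (hC₁A hx2).2 hx
    have hK'c' : K' \ c = C₁ := by
      rw [hK', Set.union_diff_left, hdisj.symm.sdiff_eq_left]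
    have hw'K' : μ (w' \ K') < a/8 := by
      have hd : μ (w' \ K') = μ w' - μ K' :=
        measure_diff hw'sup hK'c.measurableSet.nullMeasurableSet (measure_ne_top μ _)
      rw [hd, ENNReal.sub_lt_iff_lt_right (measure_ne_top μ _) (measure_mono hw'sup)]
      rw [add_comm]
      exact hw'μ
    have hb1 : μ (closure v \ c) ≤ 7/8 * a := by
      have hsub : closure v \ c ⊆ (w' \ K') ∪ C₁ := by
        intro x hx
        by_cases hxK : x ∈ K'
        · rcases hxK with h | h
          · exact absurd h hx.2
          · exact Or.inr h
        · exact Or.inl ⟨(hvw hx.1).1, hxK⟩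
      calc μ (closure v \ c) ≤ μ (w' \ K') + μ C₁ :=
            (measure_mono hsub).trans (measure_union_le _ _)
        _ ≤ a/8 + a/2 := add_le_add hw'K'.le hC₁u
        _ ≤ 7/8 * a := k87
    have hb2 : μ (u \ v) ≤ 7/8 * a := by
      have hsub : u \ v ⊆ u \ K' := Set.diff_subset_diff_right hK'v
      have hdu : (u \ K') ∪ (K' \ c) = u \ c := Set.diff_union_diff_cancel hK'u Set.subset_union_left
      have hdisj2 : Disjoint (u \ K') (K' \ c) := by
        rw [Set.disjoint_left]
        exact fun x hx hx2 => hx.2 hx2.1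
      have hdecomp : μ (u \ K') + μ (K' \ c) = a := by
        rw [← measure_union hdisj2 (hK'c.measurableSet.diff hc.measurableSet), hdu]
      have h3 : μ (u \ K') + a/8 ≤ 7/8*a + a/8 := by
        calc μ (u \ K') + a/8 ≤ μ (u \ K') + μ (K' \ c) := by
              refine add_le_add le_rfl ?_
              rw [hK'c']
              exact hC₁l.le
          _ = a := hdecomp
          _ = 7/8*a + a/8 := keq.symm
      have h5 : μ (u \ K') ≤ 7/8*a :=
        (ENNReal.add_le_add_iff_right ((ENNReal.div_lt_top hfin (by norm_num)).ne)).mp h3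
      exact (measure_mono hsub).trans h5
    exact ⟨v, hvo, hcv, hvu, hbd, hb1, hb2⟩

end DiffusePush


namespace DiffusePush

/-- A measure-controlled variant of `Urysohns.CU`. -/
structure MCU {X : Type*} [TopologicalSpace X] [MeasurableSpace X] (μ : Measure X) where
  protected C : Set X
  protected U : Set X
  protected closed_C : IsClosed C
  protected open_U : IsOpen U
  protected subset : C ⊆ U
  protected hP : ∀ {c u : Set X}, IsClosed c → IsOpen u → c ⊆ u →
    ∃ v, IsOpen v ∧ c ⊆ v ∧ closure v ⊆ u ∧ μ (closure v \ v) = 0 ∧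
      μ (closure v \ c) ≤ 7/8 * μ (u \ c) ∧ μ (u \ v) ≤ 7/8 * μ (u \ c)

namespace MCU

variable {X : Type*} [TopologicalSpace X] [MeasurableSpace X] {μ : Measure X}

/-- The chosen intermediate open set. -/
protected noncomputable def mid (c : MCU μ) : Set X :=
  (c.hP c.closed_C c.open_U c.subset).choose

protected lemma mid_spec (c : MCU μ) :
    IsOpen c.mid ∧ c.C ⊆ c.mid ∧ closure c.mid ⊆ c.U ∧ μ (closure c.mid \ c.mid) = 0 ∧
      μ (closure c.mid \ c.C) ≤ 7/8 * μ (c.U \ c.C) ∧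
      μ (c.U \ c.mid) ≤ 7/8 * μ (c.U \ c.C) :=
  (c.hP c.closed_C c.open_U c.subset).choose_spec

/-- Left child. -/
protected noncomputable def left (c : MCU μ) : MCU μ where
  C := c.C
  U := c.mid
  closed_C := c.closed_C
  open_U := c.mid_spec.1
  subset := c.mid_spec.2.1
  hP := c.hP

/-- Right child. -/
protected noncomputable def right (c : MCU μ) : MCU μ where
  C := closure c.mid
  U := c.U
  closed_C := isClosed_closure
  open_U := c.open_U
  subset := c.mid_spec.2.2.1
  hP := c.hP

@[simp] protected lemma left_C (c : MCU μ) : c.left.C = c.C := rfl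
@[simp] protected lemma left_U (c : MCU μ) : c.left.U = c.mid := rfl
@[simp] protected lemma right_C (c : MCU μ) : c.right.C = closure c.mid := rfl
@[simp] protected lemma right_U (c : MCU μ) : c.right.U = c.U := rfl

theorem left_U_subset_right_C (c : MCU μ) : c.left.U ⊆ c.right.C :=
  subset_closure

theorem left_U_subset (c : MCU μ) : c.left.U ⊆ c.U :=
  Subset.trans c.left_U_subset_right_C c.right.subset

theorem subset_right_C (c : MCU μ) : c.C ⊆ c.right.C :=
  Subset.trans c.left.subset c.left_U_subset_right_C

theorem gap_left (c : MCU μ) : μ (c.left.U \ c.left.C) ≤ 7/8 * μ (c.U \ c.C) :=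
  le_trans (measure_mono (diff_subset_diff_left subset_closure)) c.mid_spec.2.2.2.2.1

theorem gap_right (c : MCU μ) : μ (c.right.U \ c.right.C) ≤ 7/8 * μ (c.U \ c.C) :=
  le_trans (measure_mono (diff_subset_diff_right subset_closure)) c.mid_spec.2.2.2.2.2

theorem bd_null (c : MCU μ) : μ (c.right.C \ c.left.U) = 0 :=
  c.mid_spec.2.2.2.1

/-- `n`-th approximation. -/
noncomputable def approx : ℕ → MCU μ → X → ℝ
  | 0, c, x => indicator c.Uᶜ 1 x
  | n + 1, c, x => midpoint ℝ (approx n c.left x) (approx n c.right x)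

theorem approx_of_mem_C (c : MCU μ) (n : ℕ) {x : X} (hx : x ∈ c.C) : c.approx n x = 0 := by
  induction n generalizing c with
  | zero => exact indicator_of_notMem (fun (hU : x ∈ c.Uᶜ) => hU <| c.subset hx) _
  | succ n ihn =>
    simp only [approx]
    rw [ihn, ihn, midpoint_self]
    exacts [c.subset_right_C hx, hx]

theorem approx_of_nmem_U (c : MCU μ) (n : ℕ) {x : X} (hx : x ∉ c.U) : c.approx n x = 1 := by
  induction n generalizing c with
  | zero =>
    rw [← mem_compl_iff] at hx
    exact indicator_of_mem hx _
  | succ n ihn =>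
    simp only [approx]
    rw [ihn, ihn, midpoint_self]
    exacts [hx, fun hU => hx <| c.left_U_subset hU]

theorem approx_nonneg (c : MCU μ) (n : ℕ) (x : X) : 0 ≤ c.approx n x := by
  induction n generalizing c with
  | zero => exact indicator_nonneg (fun _ _ => zero_le_one) _
  | succ n ihn =>
    simp only [approx, midpoint_eq_smul_add, invOf_eq_inv]
    refine mul_nonneg (inv_nonneg.2 zero_le_two) (add_nonneg ?_ ?_) <;> apply ihn

theorem approx_le_one (c : MCU μ) (n : ℕ) (x : X) : c.approx n x ≤ 1 := by
  induction n generalizing c with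
  | zero => exact indicator_apply_le' (fun _ => le_rfl) fun _ => zero_le_one
  | succ n ihn =>
    simp only [approx, midpoint_eq_smul_add, invOf_eq_inv, smul_eq_mul, ← div_eq_inv_mul]
    have := add_le_add (ihn (MCU.left c)) (ihn (MCU.right c))
    norm_num at this
    exact Iff.mpr (div_le_one zero_lt_two) this

theorem bddAbove_range_approx (c : MCU μ) (x : X) : BddAbove (range fun n => c.approx n x) :=
  ⟨1, fun _ ⟨n, hn⟩ => hn ▸ c.approx_le_one n x⟩

theorem approx_le_approx_of_U_sub_C {c₁ c₂ : MCU μ} (h : c₁.U ⊆ c₂.C) (n₁ n₂ : ℕ) (x : X) :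
    c₂.approx n₂ x ≤ c₁.approx n₁ x := by
  by_cases hx : x ∈ c₁.U
  · calc
      approx n₂ c₂ x = 0 := approx_of_mem_C _ _ (h hx)
      _ ≤ approx n₁ c₁ x := approx_nonneg _ _ _
  · calc
      approx n₂ c₂ x ≤ 1 := approx_le_one _ _ _
      _ = approx n₁ c₁ x := (approx_of_nmem_U _ _ hx).symm

theorem approx_mem_Icc_right_left (c : MCU μ) (n : ℕ) (x : X) :
    c.approx n x ∈ Icc (c.right.approx n x) (c.left.approx n x) := by
  induction' n with n ihn generalizing c
  · exact ⟨le_rfl, indicator_le_indicator_of_subset (compl_subset_compl.2 c.left_U_subset)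
      (fun _ => zero_le_one) _⟩
  · simp only [approx, mem_Icc]
    refine ⟨midpoint_le_midpoint ?_ (ihn _).1, midpoint_le_midpoint (ihn _).2 ?_⟩ <;>
      apply approx_le_approx_of_U_sub_C
    exacts [subset_closure, subset_closure]

theorem approx_le_succ (c : MCU μ) (n : ℕ) (x : X) : c.approx n x ≤ c.approx (n + 1) x := by
  induction' n with n ihn generalizing c
  · simp only [approx, MCU.right_U, right_le_midpoint]
    exact (approx_mem_Icc_right_left c 0 x).2
  · rw [approx, approx]
    exact midpoint_le_midpoint (ihn _) (ihn _)

theorem approx_mono (c : MCU μ) (x : X) : Monotone fun n => c.approx n x :=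
  monotone_nat_of_le_succ fun n => c.approx_le_succ n x

/-- The limit function. -/
protected noncomputable def lim (c : MCU μ) (x : X) : ℝ :=
  ⨆ n, c.approx n x

theorem tendsto_approx_atTop (c : MCU μ) (x : X) :
    Tendsto (fun n => c.approx n x) atTop (𝓝 <| c.lim x) :=
  tendsto_atTop_ciSup (c.approx_mono x) ⟨1, fun _ ⟨_, hn⟩ => hn ▸ c.approx_le_one _ _⟩

theorem lim_of_mem_C (c : MCU μ) (x : X) (h : x ∈ c.C) : c.lim x = 0 := by
  simp only [MCU.lim, approx_of_mem_C, h, ciSup_const]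

theorem lim_of_nmem_U (c : MCU μ) (x : X) (h : x ∉ c.U) : c.lim x = 1 := by
  simp only [MCU.lim, approx_of_nmem_U c _ h, ciSup_const]

theorem lim_eq_midpoint (c : MCU μ) (x : X) :
    c.lim x = midpoint ℝ (c.left.lim x) (c.right.lim x) := by
  refine tendsto_nhds_unique (c.tendsto_approx_atTop x) ((tendsto_add_atTop_iff_nat 1).1 ?_)
  simp only [approx]
  exact (c.left.tendsto_approx_atTop x).midpoint (c.right.tendsto_approx_atTop x)

theorem approx_le_lim (c : MCU μ) (x : X) (n : ℕ) : c.approx n x ≤ c.lim x :=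
  le_ciSup (c.bddAbove_range_approx x) _

theorem lim_nonneg (c : MCU μ) (x : X) : 0 ≤ c.lim x :=
  (c.approx_nonneg 0 x).trans (c.approx_le_lim x 0)

theorem lim_le_one (c : MCU μ) (x : X) : c.lim x ≤ 1 :=
  ciSup_le fun _ => c.approx_le_one _ _

theorem lim_mem_Icc (c : MCU μ) (x : X) : c.lim x ∈ Icc (0 : ℝ) 1 :=
  ⟨c.lim_nonneg x, c.lim_le_one x⟩

/-- Continuity of `MCU.lim`. -/
theorem continuous_lim (c : MCU μ) : Continuous c.lim := by
  obtain ⟨h0, h1234, h1⟩ : 0 < (2⁻¹ : ℝ) ∧ (2⁻¹ : ℝ) < 3 / 4 ∧ (3 / 4 : ℝ) < 1 := by norm_num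
  refine
    continuous_iff_continuousAt.2 fun x =>
      (Metric.nhds_basis_closedBall_pow (h0.trans h1234) h1).tendsto_right_iff.2 fun n _ => ?_
  simp only [Metric.mem_closedBall]
  induction' n with n ihn generalizing c
  · filter_upwards with y
    rw [pow_zero]
    exact Real.dist_le_of_mem_Icc_01 (c.lim_mem_Icc _) (c.lim_mem_Icc _)
  · by_cases hxl : x ∈ c.left.U
    · filter_upwards [IsOpen.mem_nhds c.left.open_U hxl, ihn c.left] with _ hyl hyd
      rw [pow_succ', c.lim_eq_midpoint, c.lim_eq_midpoint,
        c.right.lim_of_mem_C _ (c.left_U_subset_right_C hyl),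
        c.right.lim_of_mem_C _ (c.left_U_subset_right_C hxl)]
      refine (dist_midpoint_midpoint_le _ _ _ _).trans ?_
      rw [dist_self, add_zero, div_eq_inv_mul]
      gcongr
    · replace hxl : x ∈ c.left.right.Cᶜ :=
        compl_subset_compl.2 c.left.right.subset hxl
      filter_upwards [IsOpen.mem_nhds (isOpen_compl_iff.2 c.left.right.closed_C) hxl,
        ihn c.left.right, ihn c.right] with y hyl hydl hydr
      replace hxl : x ∉ c.left.left.U :=
        compl_subset_compl.2 c.left.left_U_subset_right_C hxl
      replace hyl : y ∉ c.left.left.U :=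
        compl_subset_compl.2 c.left.left_U_subset_right_C hyl
      simp only [pow_succ, c.lim_eq_midpoint, c.left.lim_eq_midpoint,
        c.left.left.lim_of_nmem_U _ hxl, c.left.left.lim_of_nmem_U _ hyl]
      refine (dist_midpoint_midpoint_le _ _ _ _).trans ?_
      refine (div_le_div_of_nonneg_right (add_le_add_left (dist_midpoint_midpoint_le _ _ _ _) _)
        zero_le_two).trans ?_
      rw [dist_self, zero_add]
      set r := (3 / 4 : ℝ) ^ n
      calc _ ≤ (r / 2 + r) / 2 := by gcongr
        _ = _ := by field_simp; ring

end MCU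

end DiffusePush

namespace DiffusePush
namespace MCU

variable {X : Type*} [TopologicalSpace X] [MeasurableSpace X] {μ : Measure X}

lemma seven_eighths_lt_one : (7/8 : ℝ≥0∞) < 1 := by
  rw [ENNReal.div_lt_iff (Or.inl (by norm_num)) (Or.inl (by norm_num)), one_mul]
  norm_num

lemma midpoint_real (x y : ℝ) : midpoint ℝ x y = (x + y)/2 := by
  rw [midpoint_eq_smul_add, smul_eq_mul, invOf_eq_inv]; ring

theorem fiber_one_aux (n : ℕ) (c : MCU μ) :
    μ ({x | c.lim x = 1} ∩ c.U) ≤ (7/8)^n * μ (c.U \ c.C) := by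
  induction n generalizing c with
  | zero =>
    rw [pow_zero, one_mul]
    refine measure_mono fun x hx => ⟨hx.2, fun hC => ?_⟩
    have h := c.lim_of_mem_C x hC
    rw [hx.1] at h; norm_num at h
  | succ n ihn =>
    have hsub : {x | c.lim x = 1} ∩ c.U ⊆ {x | c.right.lim x = 1} ∩ c.right.U := by
      rintro x ⟨hl, hU⟩
      simp only [mem_setOf_eq] at hl
      have hxrc : x ∉ c.right.C := by
        intro hxc
        have h1 := c.lim_eq_midpoint x
        rw [c.right.lim_of_mem_C x hxc, hl, midpoint_real] at h1
        have h2 := c.left.lim_le_one x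
        linarith
      have hxlu : x ∉ c.left.U := fun h => hxrc (c.left_U_subset_right_C h)
      have h2 := c.lim_eq_midpoint x
      rw [c.left.lim_of_nmem_U x hxlu, hl, midpoint_real] at h2
      exact ⟨by simp only [mem_setOf_eq]; linarith, hU⟩
    calc μ ({x | c.lim x = 1} ∩ c.U) ≤ μ ({x | c.right.lim x = 1} ∩ c.right.U) :=
          measure_mono hsub
      _ ≤ (7/8)^n * μ (c.right.U \ c.right.C) := ihn c.right
      _ ≤ (7/8)^n * (7/8 * μ (c.U \ c.C)) := mul_le_mul_right c.gap_right _
      _ = (7/8)^(n+1) * μ (c.U \ c.C) := by rw [pow_succ]; ring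

theorem fiber_zero_aux (n : ℕ) (c : MCU μ) :
    μ ({x | c.lim x = 0} \ c.C) ≤ (7/8)^n * μ (c.U \ c.C) := by
  induction n generalizing c with
  | zero =>
    rw [pow_zero, one_mul]
    refine measure_mono fun x hx => ⟨?_, hx.2⟩
    by_contra hU
    have h := c.lim_of_nmem_U x hU
    have h2 := hx.1
    simp only [mem_setOf_eq] at h2
    rw [h2] at h; norm_num at h
  | succ n ihn =>
    have hsub : {x | c.lim x = 0} \ c.C ⊆ {x | c.left.lim x = 0} \ c.left.C := by
      rintro x ⟨hl, hC⟩
      simp only [mem_setOf_eq] at hl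
      have h1 := c.lim_eq_midpoint x
      rw [hl, midpoint_real] at h1
      have h2 := c.left.lim_nonneg x
      have h3 := c.right.lim_nonneg x
      exact ⟨by simp only [mem_setOf_eq]; linarith, hC⟩
    calc μ ({x | c.lim x = 0} \ c.C) ≤ μ ({x | c.left.lim x = 0} \ c.left.C) :=
          measure_mono hsub
      _ ≤ (7/8)^n * μ (c.left.U \ c.left.C) := ihn c.left
      _ ≤ (7/8)^n * (7/8 * μ (c.U \ c.C)) := mul_le_mul_right c.gap_left _
      _ = (7/8)^(n+1) * μ (c.U \ c.C) := by rw [pow_succ]; ring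

variable [IsFiniteMeasure μ]

lemma tendsto_gap (c : MCU μ) :
    Tendsto (fun n => (7/8:ℝ≥0∞)^n * μ (c.U \ c.C)) atTop (𝓝 0) := by
  have h1 := ENNReal.tendsto_pow_atTop_nhds_zero_of_lt_one seven_eighths_lt_one
  have h2 := ENNReal.Tendsto.mul_const h1 (Or.inr (measure_ne_top μ (c.U \ c.C)))
  simpa using h2

theorem fiber_one (c : MCU μ) : μ ({x | c.lim x = 1} ∩ c.U) = 0 :=
  le_antisymm (ge_of_tendsto' (tendsto_gap c) fun n => fiber_one_aux n c) zero_le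

theorem fiber_zero (c : MCU μ) : μ ({x | c.lim x = 0} \ c.C) = 0 :=
  le_antisymm (ge_of_tendsto' (tendsto_gap c) fun n => fiber_zero_aux n c) zero_le

theorem fiber_mid_aux (n : ℕ) (c : MCU μ) {t : ℝ} (ht : t ∈ Ioo (0:ℝ) 1) :
    μ {x | c.lim x = t} ≤ (7/8)^n * μ (c.U \ c.C) := by
  induction n generalizing c t with
  | zero =>
    rw [pow_zero, one_mul]
    refine measure_mono fun x hx => ?_
    simp only [mem_setOf_eq] at hx
    refine ⟨?_, fun hC => ?_⟩
    · by_contra hU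
      have h := c.lim_of_nmem_U x hU
      rw [hx] at h
      exact absurd h (ne_of_lt ht.2)
    · have h := c.lim_of_mem_C x hC
      rw [hx] at h
      exact absurd h.symm (ne_of_lt ht.1)
  | succ n ihn =>
    rcases lt_trichotomy t (1/2 : ℝ) with hlt | heq | hgt
    · have hsub : {x | c.lim x = t} ⊆ {x | c.left.lim x = 2*t} := by
        intro x hx
        simp only [mem_setOf_eq] at hx ⊢
        have hxlu : x ∈ c.left.U := by
          by_contra hxl
          have h1 := c.lim_eq_midpoint x
          rw [c.left.lim_of_nmem_U x hxl, hx, midpoint_real] at h1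
          have h2 := c.right.lim_nonneg x
          linarith
        have hxrc : x ∈ c.right.C := c.left_U_subset_right_C hxlu
        have h1 := c.lim_eq_midpoint x
        rw [c.right.lim_of_mem_C x hxrc, hx, midpoint_real] at h1
        linarith
      calc μ {x | c.lim x = t} ≤ μ {x | c.left.lim x = 2*t} := measure_mono hsub
        _ ≤ (7/8)^n * μ (c.left.U \ c.left.C) :=
            ihn c.left ⟨by linarith [ht.1], by linarith⟩
        _ ≤ (7/8)^n * (7/8 * μ (c.U \ c.C)) := mul_le_mul_right c.gap_left _
        _ = (7/8)^(n+1) * μ (c.U \ c.C) := by rw [pow_succ]; ring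
    · have hsub : {x | c.lim x = t} ⊆
          ({x | c.left.lim x = 1} ∩ c.left.U) ∪ ((c.right.C \ c.left.U) ∪
            ({x | c.right.lim x = 0} \ c.right.C)) := by
        intro x hx
        simp only [mem_setOf_eq] at hx
        by_cases hxl : x ∈ c.left.U
        · have hxrc : x ∈ c.right.C := c.left_U_subset_right_C hxl
          have h1 := c.lim_eq_midpoint x
          rw [c.right.lim_of_mem_C x hxrc, hx, midpoint_real, heq] at h1
          exact Or.inl ⟨by simp only [mem_setOf_eq]; linarith, hxl⟩
        · have h1 := c.lim_eq_midpoint x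
          rw [c.left.lim_of_nmem_U x hxl, hx, midpoint_real, heq] at h1
          by_cases hxrc : x ∈ c.right.C
          · exact Or.inr (Or.inl ⟨hxrc, hxl⟩)
          · exact Or.inr (Or.inr ⟨by simp only [mem_setOf_eq]; linarith, hxrc⟩)
      have h0 : μ {x | c.lim x = t} = 0 := by
        refine measure_mono_null hsub ?_
        refine measure_union_null (fiber_one c.left) (measure_union_null ?_ (fiber_zero c.right))
        exact c.bd_null
      rw [h0]
      exact zero_le
    · have hsub : {x | c.lim x = t} ⊆ {x | c.right.lim x = 2*t - 1} := by
        intro x hx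
        simp only [mem_setOf_eq] at hx ⊢
        have hxrc : x ∉ c.right.C := by
          intro hxc
          have h1 := c.lim_eq_midpoint x
          rw [c.right.lim_of_mem_C x hxc, hx, midpoint_real] at h1
          have h2 := c.left.lim_le_one x
          linarith
        have hxlu : x ∉ c.left.U := fun h => hxrc (c.left_U_subset_right_C h)
        have h1 := c.lim_eq_midpoint x
        rw [c.left.lim_of_nmem_U x hxlu, hx, midpoint_real] at h1
        linarith
      calc μ {x | c.lim x = t} ≤ μ {x | c.right.lim x = 2*t - 1} := measure_mono hsub
        _ ≤ (7/8)^n * μ (c.right.U \ c.right.C) :=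
            ihn c.right ⟨by linarith, by linarith [ht.2]⟩
        _ ≤ (7/8)^n * (7/8 * μ (c.U \ c.C)) := mul_le_mul_right c.gap_right _
        _ = (7/8)^(n+1) * μ (c.U \ c.C) := by rw [pow_succ]; ring

theorem fiber_mid (c : MCU μ) {t : ℝ} (ht : t ∈ Ioo (0:ℝ) 1) :
    μ {x | c.lim x = t} = 0 :=
  le_antisymm (ge_of_tendsto' (tendsto_gap c) fun n => fiber_mid_aux n c ht) zero_le

end MCU
end DiffusePush

namespace DiffusePush

section CDF

open ProbabilityTheory

lemma cdf_continuous (ν : Measure ℝ) [IsProbabilityMeasure ν] [NullSingletonClass ν] :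
    Continuous (cdf ν) := by
  have hmono : Monotone (cdf ν) := monotone_cdf ν
  refine continuous_iff_continuousAt.2 fun x => ?_
  rw [hmono.continuousAt_iff_leftLim_eq_rightLim]
  have hr : Function.rightLim (cdf ν) x = cdf ν x := by
    refine hmono.continuousWithinAt_Ioi_iff_rightLim_eq.mp ?_
    exact ((cdf ν).right_continuous x).mono Ioi_subset_Ici_self
  have hl : Function.leftLim (cdf ν) x = cdf ν x := by
    have hm : (cdf ν).measure {x} = 0 := by rw [measure_cdf]; exact measure_singleton x
    rw [StieltjesFunction.measure_singleton] at hm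
    have h1 : cdf ν x - Function.leftLim (cdf ν) x ≤ 0 := by
      rwa [ENNReal.ofReal_eq_zero] at hm
    have h2 : Function.leftLim (cdf ν) x ≤ cdf ν x := hmono.leftLim_le le_rfl
    linarith
  rw [hl, hr]

lemma map_cdf (ν : Measure ℝ) [IsProbabilityMeasure ν] [NullSingletonClass ν]
    (hlo : ν (Iio 0) = 0) (hhi : ν (Ioi 1) = 0) :
    Measure.map (cdf ν) ν = volume.restrict (Icc (0:ℝ) 1) := by
  have hmono : Monotone (cdf ν) := monotone_cdf ν
  have hcont : Continuous (cdf ν) := cdf_continuous ν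
  have hF1 : cdf ν 1 = 1 := by
    have h := measure_add_measure_compl (measurableSet_Iic (a := (1:ℝ))) (μ := ν)
    rw [compl_Iic, hhi, add_zero] at h
    rw [cdf_eq_real, measureReal_def, h]
    simp
  have hFneg : cdf ν (-1) = 0 := by
    have h : ν (Iic (-1)) = 0 :=
      measure_mono_null (Iic_subset_Iio.mpr (by norm_num)) hlo
    rw [cdf_eq_real, measureReal_def, h]
    simp
  haveI : IsProbabilityMeasure (Measure.map (cdf ν) ν) :=
    Measure.isProbabilityMeasure_map hcont.measurable.aemeasurable
  refine Measure.ext_of_Iic _ _ fun a => ?_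
  rw [Measure.map_apply hcont.measurable measurableSet_Iic,
    Measure.restrict_apply measurableSet_Iic]
  rcases lt_or_ge a 0 with ha | ha
  · have h1 : (cdf ν) ⁻¹' Iic a = ∅ := by
      ext y
      simp only [mem_preimage, mem_Iic, mem_empty_iff_false, iff_false, not_le]
      exact lt_of_lt_of_le ha (cdf_nonneg ν y)
    have h2 : Iic a ∩ Icc (0:ℝ) 1 = ∅ := by
      ext y
      simp only [mem_inter_iff, mem_Iic, mem_Icc, mem_empty_iff_false, iff_false]
      rintro ⟨h3, h4, -⟩
      linarith
    rw [h1, h2]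
    simp
  rcases le_or_gt 1 a with ha1 | ha1
  · have h1 : (cdf ν) ⁻¹' Iic a = univ := by
      ext y
      simp only [mem_preimage, mem_Iic, mem_univ, iff_true]
      exact (cdf_le_one ν y).trans ha1
    have h2 : Iic a ∩ Icc (0:ℝ) 1 = Icc 0 1 := by
      refine inter_eq_self_of_subset_right fun y hy => ?_
      exact le_trans hy.2 ha1
    rw [h1, h2, Real.volume_Icc, measure_univ]
    norm_num
  · set A : Set ℝ := (cdf ν) ⁻¹' Iic a with hA
    have hne : (-1:ℝ) ∈ A := by
      simp only [hA, mem_preimage, mem_Iic, hFneg]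
      exact ha
    have hbdd : BddAbove A := by
      refine ⟨1, fun y hy => ?_⟩
      by_contra h
      push_neg at h
      have h2 : cdf ν 1 ≤ cdf ν y := hmono h.le
      have h3 : cdf ν y ≤ a := hy
      rw [hF1] at h2
      linarith
    have hclosed : IsClosed A := isClosed_Iic.preimage hcont
    set s := sSup A with hs
    have hsA : s ∈ A := hclosed.csSup_mem ⟨-1, hne⟩ hbdd
    have hFs_le : cdf ν s ≤ a := hsA
    have hFs_ge : a ≤ cdf ν s := by
      by_contra h
      push_neg at h
      have hev : ∀ᶠ y in 𝓝 s, cdf ν y < a :=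
        (hcont.continuousAt (x := s)).eventually_lt_const h
      obtain ⟨b, hbs, hb⟩ := hev.exists_gt
      have hbA : b ∈ A := le_of_lt hb
      exact absurd (le_csSup hbdd hbA) (not_le.mpr hbs)
    have hFs : cdf ν s = a := le_antisymm hFs_le hFs_ge
    have hAs : A = Iic s := by
      ext y
      constructor
      · exact fun hy => le_csSup hbdd hy
      · intro hy
        show cdf ν y ≤ a
        exact (hmono hy).trans hFs_le
    have h2 : Iic a ∩ Icc (0:ℝ) 1 = Icc 0 a := by
      ext y
      simp only [mem_inter_iff, mem_Iic, mem_Icc]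
      constructor
      · rintro ⟨h3, h4, -⟩
        exact ⟨h4, h3⟩
      · rintro ⟨h3, h4⟩
        exact ⟨h4, h3, h4.trans ha1.le⟩
    rw [hAs, h2, ← ofReal_cdf ν s, hFs, Real.volume_Icc, sub_zero]

end CDF

section Main

variable {X : Type*} [TopologicalSpace X] [CompactSpace X] [T2Space X]
  [MeasurableSpace X] [BorelSpace X]

/-- The top-level measure-controlled Urysohn structure. -/
noncomputable def top (μ : Measure X) [IsFiniteMeasure μ] [μ.Regular] [NullSingletonClass μ] : MCU μ where
  C := ∅
  U := univ
  closed_C := isClosed_empty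
  open_U := isOpen_univ
  subset := empty_subset _
  hP := fun {c u} hc hu hcu => exists_split μ hc hu hcu

lemma top_fiber (μ : Measure X) [IsFiniteMeasure μ] [μ.Regular] [NullSingletonClass μ] (t : ℝ) :
    μ {x | (top μ).lim x = t} = 0 := by
  rcases eq_or_ne t 0 with rfl | h0
  · have h := MCU.fiber_zero (top μ)
    rwa [show (top μ).C = ∅ from rfl, diff_empty] at h
  rcases eq_or_ne t 1 with rfl | h1
  · have h := MCU.fiber_one (top μ)
    rwa [show (top μ).U = univ from rfl, inter_univ] at h
  by_cases hmem : t ∈ Ioo (0:ℝ) 1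
  · exact MCU.fiber_mid _ hmem
  · have hempty : {x | (top μ).lim x = t} = ∅ := by
      ext x
      simp only [mem_setOf_eq, mem_empty_iff_false, iff_false]
      intro he
      have hx := (top μ).lim_mem_Icc x
      rw [he] at hx
      rcases eq_or_lt_of_le hx.1 with h | h
      · exact h0 h.symm
      rcases eq_or_lt_of_le hx.2 with h' | h'
      · exact h1 h'
      exact hmem ⟨h, h'⟩
    rw [hempty, measure_empty]

end Main

end DiffusePush

open DiffusePush ProbabilityTheory in
/-- If `X` is a compact Hausdorff space and `μ` is a diffuse regular Borel probability
measure on `X`, then there is a continuous function `h : X → [0,1]` whose pushforward of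
`μ` is Lebesgue measure on `[0,1]`. -/
theorem pushforward_to_lebesgue_of_diffuse
    (X : Type*) [TopologicalSpace X] [CompactSpace X] [T2Space X]
    [MeasurableSpace X] [BorelSpace X]
    (μ : Measure X) [IsProbabilityMeasure μ] [μ.Regular]
    (hdiffuse : ∀ x : X, μ {x} = 0) :
    ∃ h : C(X, ℝ), (∀ x : X, h x ∈ Set.Icc (0 : ℝ) 1) ∧
      Measure.map h μ = volume.restrict (Set.Icc (0 : ℝ) 1) := by
  haveI : NullSingletonClass μ := ⟨hdiffuse⟩
  set c := top μ with hc
  have hmeas : Measurable c.lim := c.continuous_lim.measurable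
  set ν : Measure ℝ := Measure.map c.lim μ with hν
  haveI : IsProbabilityMeasure ν := Measure.isProbabilityMeasure_map hmeas.aemeasurable
  haveI : NullSingletonClass ν := by
    refine ⟨fun t => ?_⟩
    rw [hν, Measure.map_apply hmeas (measurableSet_singleton t)]
    exact top_fiber μ t
  have hlo : ν (Iio 0) = 0 := by
    rw [hν, Measure.map_apply hmeas measurableSet_Iio]
    have : c.lim ⁻¹' Iio 0 = ∅ := by
      ext x
      simp only [Set.mem_preimage, Set.mem_Iio, Set.mem_empty_iff_false, iff_false, not_lt]
      exact c.lim_nonneg x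
    rw [this, measure_empty]
  have hhi : ν (Ioi 1) = 0 := by
    rw [hν, Measure.map_apply hmeas measurableSet_Ioi]
    have : c.lim ⁻¹' Ioi 1 = ∅ := by
      ext x
      simp only [Set.mem_preimage, Set.mem_Ioi, Set.mem_empty_iff_false, iff_false, not_lt]
      exact c.lim_le_one x
    rw [this, measure_empty]
  have hmap := map_cdf ν hlo hhi
  have hFc : Continuous (cdf ν) := cdf_continuous ν
  refine ⟨⟨fun x => cdf ν (c.lim x), hFc.comp c.continuous_lim⟩, fun x => ⟨cdf_nonneg ν _, cdf_le_one ν _⟩, ?_⟩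
  have hcoe : ⇑(ContinuousMap.mk (fun x => cdf ν (c.lim x)) (hFc.comp c.continuous_lim)) =
      (cdf ν) ∘ c.lim := rfl
  rw [hcoe, ← Measure.map_map hFc.measurable hmeas, ← hν, hmap]
end

section
/- Let X be a compact Hausdorff space, let n ≥ 1 be an integer, and let μ be a Borel probability measure on X such that μ({x₀}) > 1/n for some point x₀ ∈ X. Then there do not exist Borel measurable functions u₁, …, uₙ : X → 𝕋 such that {u₁, …, uₙ} is an orthonormal set in L²(X, μ), i.e. such that ∫_X u_i · conj(u_j) dμ = 0 whenever i ≠ j. -/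
/-!
Bessel's inequality against the indicator `e` of the atom: `⟪e, u i⟫ = μ {x₀} * u i x₀` has
modulus `μ {x₀}`, so `n * μ {x₀} ^ 2 ≤ ‖e‖ ^ 2 = μ {x₀}`, i.e. `μ {x₀} ≤ 1 / n`.
-/

open MeasureTheory
open scoped ENNReal ComplexConjugate InnerProductSpace

section

variable {X : Type*} [MeasurableSpace X] {μ : Measure X}

theorem MeasureTheory.MemLp.inner_toLp_toLp {f g : X → ℂ} (hf : MemLp f 2 μ)
    (hg : MemLp g 2 μ) :
    ⟪hf.toLp f, hg.toLp g⟫_ℂ = ∫ x, g x * conj (f x) ∂μ := by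
  rw [L2.inner_def]
  refine integral_congr_ae ?_
  filter_upwards [hf.coeFn_toLp, hg.coeFn_toLp] with x hfx hgx
  rw [hfx, hgx, RCLike.inner_apply]

theorem orthonormal_toLp_of_norm_eq_one [IsProbabilityMeasure μ] {ι : Type*}
    {u : ι → X → ℂ} (hu : ∀ i, MemLp (u i) 2 μ) (hnorm : ∀ i x, ‖u i x‖ = 1)
    (horth : ∀ i j, i ≠ j → ∫ x, u i x * conj (u j x) ∂μ = 0) :
    Orthonormal ℂ fun i => (hu i).toLp (u i) := by
  classical
  rw [orthonormal_iff_ite]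
  intro i j
  rw [MemLp.inner_toLp_toLp]
  split_ifs with hij
  · subst hij
    have hself : ∀ x, u i x * conj (u i x) = 1 := fun x => by
      rw [RCLike.mul_conj, hnorm]; simp
    simp [hself]
  · exact horth j i (Ne.symm hij)

theorem inner_indicatorConstLp_singleton_toLp [MeasurableSingletonClass X] {x₀ : X}
    (hx₀ : μ {x₀} ≠ ∞) {f : X → ℂ} (hf : MemLp f 2 μ) :
    ⟪indicatorConstLp 2 (measurableSet_singleton x₀) hx₀ (1 : ℂ), hf.toLp f⟫_ℂ
      = μ.real {x₀} * f x₀ := by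
  rw [L2.inner_indicatorConstLp_one, setIntegral_congr_ae (measurableSet_singleton x₀)
    (hf.coeFn_toLp.mono fun x hx _ => hx), integral_singleton]
  simp

theorem measureReal_singleton_mul_sum_norm_sq_le [MeasurableSingletonClass X] [IsFiniteMeasure μ]
    {ι : Type*} {u : ι → X → ℂ} (hu : ∀ i, MemLp (u i) 2 μ)
    (hon : Orthonormal ℂ fun i => (hu i).toLp (u i)) (s : Finset ι) (x₀ : X) :
    μ.real {x₀} * ∑ i ∈ s, ‖u i x₀‖ ^ 2 ≤ 1 := by
  set e := indicatorConstLp 2 (measurableSet_singleton x₀) (measure_ne_top μ {x₀}) (1 : ℂ)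
  have hbessel := hon.sum_inner_products_le (s := s) e
  have hnorm_e : ‖e‖ ^ 2 = μ.real {x₀} := by
    rw [norm_indicatorConstLp two_ne_zero ENNReal.ofNat_ne_top, norm_one, one_mul,
      ← Real.rpow_natCast, ← Real.rpow_mul measureReal_nonneg]
    norm_num
  have hinner : ∀ i, ‖⟪(hu i).toLp (u i), e⟫_ℂ‖ ^ 2 = μ.real {x₀} ^ 2 * ‖u i x₀‖ ^ 2 :=
      fun i => by
    rw [norm_inner_symm, inner_indicatorConstLp_singleton_toLp, norm_mul, Complex.norm_real,
      Real.norm_of_nonneg measureReal_nonneg, mul_pow]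
  simp only [hinner, ← Finset.mul_sum, hnorm_e] at hbessel
  rcases (measureReal_nonneg (μ := μ) (s := {x₀})).eq_or_lt with hm | hm
  · simp [← hm]
  · nlinarith
end

theorem no_orthonormal_unimodular_family_of_large_atom_general
    (X : Type*) [TopologicalSpace X] [T2Space X]
    [MeasurableSpace X] [BorelSpace X]
    (n : ℕ)
    (μ : Measure X) [IsProbabilityMeasure μ]
    (x₀ : X) (hx₀ : (1 : ℝ≥0∞) / n < μ {x₀}) :
    ¬ ∃ u : Fin n → X → ℂ,
        (∀ i, Measurable (u i)) ∧
        (∀ i x, ‖u i x‖ = 1) ∧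
        (∀ i j, i ≠ j → ∫ x, u i x * (starRingEnd ℂ) (u j x) ∂μ = 0) := by
  rintro ⟨u, hmeas, hnorm, horth⟩
  have hu : ∀ i, MemLp (u i) 2 μ := fun i =>
    .of_bound (hmeas i).aestronglyMeasurable 1 (.of_forall fun x => (hnorm i x).le)
  have hbessel := measureReal_singleton_mul_sum_norm_sq_le hu
    (orthonormal_toLp_of_norm_eq_one hu hnorm horth) Finset.univ x₀
  simp only [hnorm, one_pow, Finset.sum_const, Finset.card_univ, Fintype.card_fin,
    nsmul_eq_mul, mul_one] at hbessel
  have : μ {x₀} * n ≤ 1 := by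
    rw [← ENNReal.ofReal_one, ← ENNReal.ofReal_toReal (measure_ne_top μ {x₀}),
      ← ENNReal.ofReal_natCast, ← ENNReal.ofReal_mul ENNReal.toReal_nonneg]
    exact ENNReal.ofReal_le_ofReal hbessel
  rw [ENNReal.div_lt_iff (.inr one_ne_zero) (.inl (ENNReal.natCast_ne_top n))] at hx₀
  exact this.not_gt hx₀

/-- If `μ` is a Borel probability measure on a compact Hausdorff space `X` with an atom of
mass exceeding `1/n`, then there is no orthonormal family of `n` circle-valued measurable
functions in `L²(X, μ)`. -/
theorem no_orthonormal_unimodular_family_of_large_atom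
    (X : Type*) [TopologicalSpace X] [CompactSpace X] [T2Space X]
    [MeasurableSpace X] [BorelSpace X]
    (n : ℕ) (hn : 1 ≤ n)
    (μ : Measure X) [IsProbabilityMeasure μ]
    (x₀ : X) (hx₀ : (1 : ℝ≥0∞) / n < μ {x₀}) :
    ¬ ∃ u : Fin n → X → ℂ,
        (∀ i, Measurable (u i)) ∧
        (∀ i x, ‖u i x‖ = 1) ∧
        (∀ i j, i ≠ j → ∫ x, u i x * (starRingEnd ℂ) (u j x) ∂μ = 0) :=
  no_orthonormal_unimodular_family_of_large_atom_general X n μ x₀ hx₀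
end

section
/- Let m be Lebesgue measure on [0,1], let δ be the Dirac measure at the point 0 of [0,1], and let μ = (1/2)δ + (1/2)m. Then { ∫₀¹ u dμ : u ∈ C([0,1], ℂ) with |u(x)| = 1 for all x ∈ [0,1] } = { λ ∈ ℂ : 0 < |λ| ≤ 1 }. In particular, there is no continuous function u : [0,1] → 𝕋 with ∫₀¹ u dμ = 0. -/
/-!
Write `∫ u dμ = (u 0 + ∫ u dm) / 2`. The bound `‖∫ u dμ‖ ≤ 1` is the triangle inequality. If
`∫ u dm = -u 0`, then `1 + Re (conj (u 0) * u)` is continuous, nonnegative, equal to `2` at `0`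
and of Lebesgue integral `0`, which is impossible. Conversely, for `t ∈ (-1, 1)` the Blaschke
factor `B(z) = (z + t) / (1 + t z)` maps the unit circle to itself with `B 1 = 1`, and by the
mean value property its average over the circle is `B 0 = t`; so `u(x) = c B(e^{2π i x})`
with `|c| = 1` has `∫ u dμ = c (1 + t) / 2`, which covers the punctured disc.
-/

open MeasureTheory Complex ComplexConjugate Metric Real
open scoped ENNReal

theorem MeasureTheory.Measure.isOpenPosMeasure_comap_subtype_val {α : Type*}
    [TopologicalSpace α] [MeasurableSpace α] (μ : Measure α) [μ.IsOpenPosMeasure]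
    {s : Set α} (hs : MeasurableSet s) (hs_int : s ⊆ closure (interior s)) :
    (μ.comap ((↑) : s → α)).IsOpenPosMeasure := by
  refine ⟨fun U hU ⟨x, hx⟩ => ?_⟩
  obtain ⟨V, hV, rfl⟩ := isOpen_induced_iff.1 hU
  have hV_int : (interior s ∩ V).Nonempty :=
    (closure_inter_open_nonempty_iff hV).1 ⟨x, hs_int x.2, hx⟩
  rw [(MeasurableEmbedding.subtype_coe hs).comap_apply, Subtype.image_preimage_coe]
  exact fun h0 => (isOpen_interior.inter hV).measure_ne_zero μ hV_int <|
    measure_mono_null (Set.inter_subset_inter_left _ interior_subset) h0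

instance : (volume : Measure (Set.Icc (0 : ℝ) 1)).IsOpenPosMeasure :=
  Measure.isOpenPosMeasure_comap_subtype_val volume measurableSet_Icc <| by
    rw [interior_Icc, closure_Ioo zero_ne_one]

section Integrals

theorem integral_smul_dirac_add_smul {X E : Type*} [MeasurableSpace X]
    [MeasurableSingletonClass X] [NormedAddCommGroup E] [NormedSpace ℝ E] [CompleteSpace E]
    {a b : ℝ≥0∞} (ha : a ≠ ∞) (hb : b ≠ ∞) (p : X) (ν : Measure X) {f : X → E}
    (hf : Integrable f ν) :
    ∫ x, f x ∂(a • Measure.dirac p + b • ν) = a.toReal • f p + b.toReal • ∫ x, f x ∂ν := by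
  rw [integral_add_measure ((integrable_dirac enorm_lt_top).smul_measure ha)
    (hf.smul_measure hb), integral_smul_measure, integral_smul_measure, integral_dirac]

variable {X : Type*} [TopologicalSpace X] [MeasurableSpace X] {ν : Measure X}
  [IsProbabilityMeasure ν]

theorem norm_integral_le_one (u : C(X, ℂ)) (hu : ∀ x, ‖u x‖ = 1) : ‖∫ x, u x ∂ν‖ ≤ 1 := by
  simpa using norm_integral_le_of_norm_le_const (μ := ν) (ae_of_all _ fun x => (hu x).le)

variable [OpensMeasurableSpace X]

theorem integrable_of_norm_eq_one (u : C(X, ℂ)) (hu : ∀ x, ‖u x‖ = 1) : Integrable u ν :=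
  .of_bound u.continuous.aestronglyMeasurable 1 (ae_of_all _ fun x => (hu x).le)

theorem integral_ne_neg_apply [ν.IsOpenPosMeasure] (u : C(X, ℂ)) (hu : ∀ x, ‖u x‖ = 1) (p : X) :
    ∫ x, u x ∂ν ≠ -u p := by
  intro h
  set c := conj (u p)
  have hc : c * u p = 1 := by
    rw [mul_comm, mul_conj, normSq_eq_norm_sq, hu]
    norm_num
  have hw : ∀ x, ‖c * u x‖ = 1 := by simp [c, hu]
  have hw_int : Integrable (fun x => c * u x) ν := (integrable_of_norm_eq_one u hu).const_mul c
  have hw_re_int : Integrable (fun x => (c * u x).re) ν := hw_int.re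
  have hw_re_integral : ∫ x, (c * u x).re ∂ν = -1 := by
    calc ∫ x, (c * u x).re ∂ν = (∫ x, c * u x ∂ν).re := integral_re hw_int
      _ = -1 := by simp [integral_const_mul, h, hc]
  have hpos : 0 < ∫ x, 1 + (c * u x).re ∂ν := by
    refine integral_pos_of_integrable_nonneg_nonzero (x := p) (by fun_prop)
      ((integrable_const 1).add hw_re_int) (fun x => ?_) (by simp [hc])
    have := neg_le_of_abs_le ((abs_re_le_norm _).trans_eq (hw x))
    simp only [Pi.zero_apply]
    linarith
  rw [integral_add (integrable_const 1) hw_re_int, hw_re_integral] at hpos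
  simp at hpos

theorem norm_half_apply_add_half_integral_pos_and_le_one [ν.IsOpenPosMeasure] (u : C(X, ℂ))
    (hu : ∀ x, ‖u x‖ = 1) (p : X) :
    0 < ‖(1 / 2 : ℝ) • u p + (1 / 2 : ℝ) • ∫ x, u x ∂ν‖ ∧
      ‖(1 / 2 : ℝ) • u p + (1 / 2 : ℝ) • ∫ x, u x ∂ν‖ ≤ 1 := by
  refine ⟨norm_pos_iff.2 fun h => integral_ne_neg_apply (ν := ν) u hu p ?_, ?_⟩
  · linear_combination (norm := module) (2 : ℝ) • h
  · calc _ ≤ (1 / 2 : ℝ) * ‖u p‖ + (1 / 2 : ℝ) * ‖∫ x, u x ∂ν‖ := by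
          grw [norm_add_le, norm_smul, norm_smul, Real.norm_of_nonneg (by norm_num)]
      _ ≤ 1 := by linarith [hu p, norm_integral_le_one (ν := ν) u hu]

end Integrals

section Blaschke

noncomputable def blaschkeFactor (a z : ℂ) : ℂ := (z - a) / (1 - conj a * z)

variable {a z : ℂ}

theorem one_sub_conj_mul_ne_zero (ha : ‖a‖ < 1) (hz : ‖z‖ ≤ 1) : 1 - conj a * z ≠ 0 := by
  refine sub_ne_zero.2 fun h => ?_
  have : ‖conj a * z‖ < 1 := by
    rw [norm_mul, RCLike.norm_conj]
    nlinarith [norm_nonneg a, norm_nonneg z]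
  rw [← h, norm_one] at this
  exact this.false

theorem norm_blaschkeFactor (ha : ‖a‖ < 1) (hz : ‖z‖ = 1) : ‖blaschkeFactor a z‖ = 1 := by
  have hzz : z * conj z = 1 := by rw [mul_conj, normSq_eq_norm_sq, hz]; norm_num
  have hnum : z - a = z * conj (1 - conj a * z) := by
    simp only [map_sub, map_one, map_mul, conj_conj]
    linear_combination a * hzz
  rw [blaschkeFactor, norm_div, hnum, norm_mul, RCLike.norm_conj, hz, one_mul,
    div_self (norm_ne_zero_iff.2 (one_sub_conj_mul_ne_zero ha hz.le))]

theorem differentiableOn_blaschkeFactor (ha : ‖a‖ < 1) :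
    DifferentiableOn ℂ (blaschkeFactor a) (closedBall 0 1) :=
  (differentiableOn_id.sub_const a).div (by fun_prop) fun z hz =>
    one_sub_conj_mul_ne_zero ha (mem_closedBall_zero_iff.1 hz)

theorem circleAverage_blaschkeFactor (ha : ‖a‖ < 1) :
    circleAverage (blaschkeFactor a) 0 1 = -a := by
  rw [DiffContOnCl.circleAverage (DifferentiableOn.diffContOnCl ?_)]
  · simp [blaschkeFactor]
  · simpa [closure_ball _ one_ne_zero] using differentiableOn_blaschkeFactor ha

end Blaschke

theorem circleAverage_eq_integral_Icc {E : Type*} [NormedAddCommGroup E] [NormedSpace ℝ E]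
    (f : ℂ → E) (c : ℂ) (R : ℝ) :
    circleAverage f c R = ∫ x : Set.Icc (0 : ℝ) 1, f (circleMap c R (2 * π * x)) := by
  rw [integral_subtype measurableSet_Icc (fun x => f (circleMap c R (2 * π * x))),
    integral_Icc_eq_integral_Ioc, ← intervalIntegral.integral_of_le zero_le_one,
    intervalIntegral.integral_comp_mul_left (fun θ => f (circleMap c R θ)) (by positivity),
    circleAverage_def, mul_zero, mul_one]

theorem exists_unimodular_integral_eq {t : ℝ} (ht : t ∈ Set.Ioc (-1) 1) :
    ∃ v : C(Set.Icc (0 : ℝ) 1, ℂ), (∀ x, ‖v x‖ = 1) ∧ v 0 = 1 ∧ ∫ x, v x = t := by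
  rcases ht.2.eq_or_lt with rfl | ht_lt
  · exact ⟨1, fun _ => by simp, rfl, by simp⟩
  have ha : ‖(-t : ℂ)‖ < 1 := by
    rw [norm_neg, Complex.norm_real, Real.norm_eq_abs, abs_lt]
    exact ⟨ht.1, ht_lt⟩
  have hcircle : ∀ x : Set.Icc (0 : ℝ) 1, circleMap 0 1 (2 * π * x) ∈ closedBall 0 1 :=
    fun x => sphere_subset_closedBall (circleMap_mem_sphere 0 zero_le_one _)
  refine ⟨⟨_, (differentiableOn_blaschkeFactor ha).continuousOn.comp_continuous
    (by fun_prop) hcircle⟩, fun x => norm_blaschkeFactor ha (by simp), ?_, ?_⟩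
  · have : (1 : ℂ) + t ≠ 0 := by exact_mod_cast (by linarith [ht.1] : (1 : ℝ) + t ≠ 0)
    simp [blaschkeFactor, circleMap, this]
  · simpa using (circleAverage_eq_integral_Icc (blaschkeFactor (-t)) 0 1).symm.trans
      (circleAverage_blaschkeFactor ha)

theorem exists_unimodular_half_apply_add_half_integral_eq {z : ℂ} (hz₀ : 0 < ‖z‖)
    (hz₁ : ‖z‖ ≤ 1) :
    ∃ u : C(Set.Icc (0 : ℝ) 1, ℂ), (∀ x, ‖u x‖ = 1) ∧
      (1 / 2 : ℝ) • u 0 + (1 / 2 : ℝ) • ∫ x, u x = z := by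
  obtain ⟨v, hv, hv₀, hv_int⟩ := exists_unimodular_integral_eq (t := 2 * ‖z‖ - 1)
    ⟨by linarith, by linarith⟩
  have hz : (‖z‖ : ℂ) ≠ 0 := by exact_mod_cast hz₀.ne'
  refine ⟨(z / ‖z‖) • v, fun x => by simp [hv, hz₀.ne'], ?_⟩
  simp only [ContinuousMap.smul_apply, smul_eq_mul, real_smul, integral_const_mul, hv₀, hv_int]
  push_cast
  field_simp
  ring

/-- For the measure `μ = ½δ₀ + ½m` on `[0,1]` (Dirac at `0` plus Lebesgue), the set of
integrals `∫ u dμ` of unimodular continuous functions `u : [0,1] → ℂ` is exactly the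
punctured closed unit disc `{λ : 0 < |λ| ≤ 1}`; in particular there is no continuous
`u : [0,1] → 𝕋` with `∫ u dμ = 0`. -/
theorem integrals_of_unitaries_eq_punctured_disc :
    ∀ μ : Measure (Set.Icc (0 : ℝ) 1),
      μ = (1 / 2 : ℝ≥0∞) • Measure.dirac (⟨0, by norm_num⟩ : Set.Icc (0 : ℝ) 1)
            + (1 / 2 : ℝ≥0∞) • volume →
      ({z : ℂ | ∃ u : C(Set.Icc (0 : ℝ) 1, ℂ),
          (∀ x, ‖u x‖ = 1) ∧ ∫ x, u x ∂μ = z}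
        = {z : ℂ | 0 < ‖z‖ ∧ ‖z‖ ≤ 1}) ∧
      ¬ ∃ u : C(Set.Icc (0 : ℝ) 1, ℂ),
          (∀ x, ‖u x‖ = 1) ∧ ∫ x, u x ∂μ = 0 := by
  intro μ hμ
  have hμ_integral : ∀ u : C(Set.Icc (0 : ℝ) 1, ℂ), (∀ x, ‖u x‖ = 1) →
      ∫ x, u x ∂μ = (1 / 2 : ℝ) • u 0 + (1 / 2 : ℝ) • ∫ x, u x := fun u hu => by
    rw [hμ, integral_smul_dirac_add_smul (by norm_num) (by norm_num) _ _
      (integrable_of_norm_eq_one u hu)]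
    norm_num
  have hS : {z : ℂ | ∃ u : C(Set.Icc (0 : ℝ) 1, ℂ), (∀ x, ‖u x‖ = 1) ∧ ∫ x, u x ∂μ = z} =
      {z : ℂ | 0 < ‖z‖ ∧ ‖z‖ ≤ 1} := by
    ext z
    constructor
    · rintro ⟨u, hu, rfl⟩
      rw [hμ_integral u hu]
      exact norm_half_apply_add_half_integral_pos_and_le_one u hu 0
    · rintro ⟨hz₀, hz₁⟩
      obtain ⟨u, hu, rfl⟩ := exists_unimodular_half_apply_add_half_integral_eq hz₀ hz₁
      exact ⟨u, hu, hμ_integral u hu⟩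
  refine ⟨hS, fun h => ?_⟩
  have h0 : (0 : ℂ) ∈ {z : ℂ | 0 < ‖z‖ ∧ ‖z‖ ≤ 1} := hS ▸ h
  simp at h0
end

section
/- There exists a real number α₀ with 0 < α₀ < 1/2 such that the following holds for every α ∈ [α₀, 1/2]: let β ≥ 0 be the real number determined by α² − β·√(1−α²) = −α, and let γ ≥ 0 be a real number with α² + β² + γ² = 1; then every triple λ₁, λ₂, λ₃ ∈ ℂ satisfying |−α + √(1−α²)·λ_j| = 1 and 1 − √3·γ ≤ |−α − β·λ_j| ≤ 1 + √3·γ for j = 1, 2, 3 has λ₁ + λ₂ + λ₃ ≠ 0. -/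
/-!
Write `s = √(1 - α²)`. At `α = 1/2` we have `β = s = √3/2` and `γ = 0`, so both conditions say
that `s λ` lies at distance `1` from `α` and from `-α`, which forces `λ = ±i`; three numbers
`±i` never sum to zero. For `α` near `1/2` everything moves little: `γ² s² = (1 - 2α)(1 + α)²`
is small, the identity `2αβ(s + β) Re λ = s (|α + βλ|² - 1 + γ²)` makes `Re λ` small, and then
`s (|λ|² - 1) = 2α Re λ` puts `|Im λ|` in `[9/10, 11/10]`. Two of the three imaginary parts
have the same sign, so their sum is at least `9/5` in modulus and cannot cancel the third.
-/

open Complex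

lemma add_add_ne_zero_of_abs_mem_Icc {a b : ℝ} (hab : b < 2 * a) (y : Fin 3 → ℝ)
    (hy : ∀ j, |y j| ∈ Set.Icc a b) : y 0 + y 1 + y 2 ≠ 0 := by
  obtain ⟨h0a, h0b⟩ := hy 0
  obtain ⟨h1a, h1b⟩ := hy 1
  obtain ⟨h2a, h2b⟩ := hy 2
  intro hsum
  rcases abs_cases (y 0) with ⟨e0, -⟩ | ⟨e0, -⟩ <;>
  rcases abs_cases (y 1) with ⟨e1, -⟩ | ⟨e1, -⟩ <;>
  rcases abs_cases (y 2) with ⟨e2, -⟩ | ⟨e2, -⟩ <;> linarith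

lemma abs_sq_sub_one_le {r δ : ℝ} (h : |r - 1| ≤ δ) : |r ^ 2 - 1| ≤ δ * (2 + δ) := by
  have h' : |r + 1| ≤ 2 + δ :=
    calc |r + 1| = |(r - 1) + 2| := by ring_nf
      _ ≤ |r - 1| + |2| := abs_add_le _ _
      _ ≤ 2 + δ := by rw [abs_two]; linarith
  calc |r ^ 2 - 1| = |r - 1| * |r + 1| := by rw [← abs_mul]; ring_nf
    _ ≤ δ * (2 + δ) := mul_le_mul h h' (abs_nonneg _) ((abs_nonneg _).trans h)

lemma sq_norm_neg_ofReal_add_ofReal_mul (a c : ℝ) (z : ℂ) :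
    ‖-(a : ℂ) + c * z‖ ^ 2 = (c * z.re - a) ^ 2 + (c * z.im) ^ 2 := by
  rw [Complex.sq_norm, normSq_apply]
  simp only [add_re, neg_re, ofReal_re, mul_re, ofReal_im, zero_mul, sub_zero, add_im, neg_im,
    neg_zero, mul_im, add_zero, zero_add]
  ring

section

variable {α β γ s : ℝ}

lemma sq_mul_sq_eq_one_sub_two_mul_mul_sq (hs : s ^ 2 = 1 - α ^ 2) (hβ : β * s = α ^ 2 + α)
    (hγ : α ^ 2 + β ^ 2 + γ ^ 2 = 1) : γ ^ 2 * s ^ 2 = (1 - 2 * α) * (1 + α) ^ 2 := by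
  linear_combination s ^ 2 * hγ - (β * s + α ^ 2 + α) * hβ + (1 - α ^ 2) * hs

lemma parameter_bounds (hα : α ∈ Set.Icc (0.4999 : ℝ) (1 / 2)) (hs0 : 0 ≤ s)
    (hs : s ^ 2 = 1 - α ^ 2) (hβ : β * s = α ^ 2 + α) (hγ : α ^ 2 + β ^ 2 + γ ^ 2 = 1) :
    4 / 5 ≤ s ∧ s ≤ 1 ∧ 7 / 10 ≤ β ∧ γ ^ 2 ≤ 1 / 1500 := by
  obtain ⟨hα₀, hα₁⟩ := hα
  have hs_lb : 4 / 5 ≤ s := by nlinarith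
  have hs_ub : s ≤ 1 := by nlinarith
  refine ⟨hs_lb, hs_ub, by nlinarith, ?_⟩
  have := sq_mul_sq_eq_one_sub_two_mul_mul_sq hs hβ hγ
  nlinarith [sq_nonneg γ]

variable {z : ℂ}

lemma sq_add_sq_eq_one_of_norm_eq_one (hz : ‖-(α : ℂ) + s * z‖ = 1) :
    (s * z.re - α) ^ 2 + (s * z.im) ^ 2 = 1 := by
  rw [← sq_norm_neg_ofReal_add_ofReal_mul, hz, one_pow]

lemma mul_normSq_sub_one_eq_mul_re (hs : s ^ 2 = 1 - α ^ 2) (hs0 : s ≠ 0)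
    (hz : ‖-(α : ℂ) + s * z‖ = 1) : s * (normSq z - 1) = 2 * α * z.re := by
  have e := sq_add_sq_eq_one_of_norm_eq_one hz
  apply mul_left_cancel₀ hs0
  rw [normSq_apply]
  linear_combination e - hs

lemma mul_re_eq_mul_sq_norm_sub_one_add_sq (hs : s ^ 2 = 1 - α ^ 2) (hs0 : s ≠ 0)
    (hγ : α ^ 2 + β ^ 2 + γ ^ 2 = 1) (hz : ‖-(α : ℂ) + s * z‖ = 1) :
    2 * α * β * (s + β) * z.re = s * (‖-(α : ℂ) - β * z‖ ^ 2 - 1 + γ ^ 2) := by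
  have e := sq_add_sq_eq_one_of_norm_eq_one hz
  have hN : ‖-(α : ℂ) - β * z‖ ^ 2 = (-β * z.re - α) ^ 2 + (-β * z.im) ^ 2 := by
    rw [← sq_norm_neg_ofReal_add_ofReal_mul]; push_cast; ring_nf
  apply mul_left_cancel₀ hs0
  rw [hN]
  linear_combination (-β ^ 2) * e - s ^ 2 * hγ + β ^ 2 * hs

lemma abs_re_le_one_div_eight (hα : (0.4999 : ℝ) ≤ α) (hs_lb : 4 / 5 ≤ s) (hs_ub : s ≤ 1)
    (hβ_lb : 7 / 10 ≤ β) (hγ_sq : γ ^ 2 ≤ 1 / 1500) {δ : ℝ} (hδ : δ ≤ 1 / 20)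
    (hs : s ^ 2 = 1 - α ^ 2) (hγ : α ^ 2 + β ^ 2 + γ ^ 2 = 1)
    (hz₁ : ‖-(α : ℂ) + s * z‖ = 1) (hz₂ : |‖-(α : ℂ) - β * z‖ - 1| ≤ δ) :
    |z.re| ≤ 1 / 8 := by
  have hD : 1 ≤ 2 * α * β * (s + β) :=
    calc (1 : ℝ) ≤ 2 * 0.4999 * (7 / 10) * (4 / 5 + 7 / 10) := by norm_num
      _ ≤ 2 * α * β * (s + β) := by gcongr
  have hN : |‖-(α : ℂ) - β * z‖ ^ 2 - 1| ≤ 1 / 20 * (2 + 1 / 20) := by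
    have hδ0 : 0 ≤ δ := (abs_nonneg _).trans hz₂
    exact (abs_sq_sub_one_le hz₂).trans (by gcongr)
  calc |z.re| ≤ |2 * α * β * (s + β)| * |z.re| :=
        le_mul_of_one_le_left (abs_nonneg _) (hD.trans (le_abs_self _))
    _ = |s| * |‖-(α : ℂ) - β * z‖ ^ 2 - 1 + γ ^ 2| := by
        rw [← abs_mul, mul_re_eq_mul_sq_norm_sub_one_add_sq hs (by positivity) hγ hz₁, abs_mul]
    _ ≤ 1 * (|‖-(α : ℂ) - β * z‖ ^ 2 - 1| + γ ^ 2) := by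
        gcongr
        · rwa [abs_of_nonneg (by linarith)]
        · exact (abs_add_le _ _).trans (by rw [abs_sq])
    _ ≤ 1 / 8 := by linarith

lemma abs_im_mem_Icc_of_abs_re_le (hα₀ : 0 ≤ α) (hα : α ≤ 1 / 2) (hs_lb : 4 / 5 ≤ s)
    (hs : s ^ 2 = 1 - α ^ 2)
    (hz : ‖-(α : ℂ) + s * z‖ = 1) (hre : |z.re| ≤ 1 / 8) :
    |z.im| ∈ Set.Icc (9 / 10) (11 / 10) := by
  have key : s * (z.im ^ 2 - 1) = 2 * α * z.re - s * z.re ^ 2 := by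
    linear_combination mul_normSq_sub_one_eq_mul_re hs (by positivity) hz - s * normSq_apply z
  have hre_sq : z.re ^ 2 ≤ 1 / 64 := by nlinarith [sq_abs z.re, abs_nonneg z.re]
  have h2αre : |2 * α * z.re| ≤ 1 / 8 := by
    rw [abs_mul, abs_of_nonneg (by positivity : 0 ≤ 2 * α)]; nlinarith [abs_nonneg z.re]
  have him : |z.im ^ 2 - 1| ≤ 19 / 100 := by
    have : s * |z.im ^ 2 - 1| ≤ 1 / 8 + s / 64 := by
      calc s * |z.im ^ 2 - 1| = |2 * α * z.re - s * z.re ^ 2| := by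
            rw [← key, abs_mul, abs_of_nonneg (by positivity : 0 ≤ s)]
        _ ≤ |2 * α * z.re| + |s * z.re ^ 2| := abs_sub _ _
        _ ≤ 1 / 8 + s / 64 := by
            rw [abs_of_nonneg (by positivity : 0 ≤ s * z.re ^ 2)]; nlinarith
    nlinarith [abs_nonneg (z.im ^ 2 - 1)]
  rw [abs_le] at him
  constructor
  · nlinarith [sq_abs z.im, abs_nonneg z.im]
  · nlinarith [sq_abs z.im, abs_nonneg z.im]

end

/-- There is `0 < α₀ < 1/2` such that for every `α ∈ [α₀, 1/2]`, with `β, γ ≥ 0` determined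
by `α² - β√(1-α²) = -α` and `α² + β² + γ² = 1`, every triple `λ₁, λ₂, λ₃ ∈ ℂ` satisfying
`|-α + √(1-α²)·λⱼ| = 1` and `1 - √3·γ ≤ |-α - β·λⱼ| ≤ 1 + √3·γ` has nonzero sum. -/
theorem exists_alpha0_sum_ne_zero :
    ∃ α₀ : ℝ, 0 < α₀ ∧ α₀ < 1 / 2 ∧
      ∀ α ∈ Set.Icc α₀ (1 / 2 : ℝ), ∀ β γ : ℝ, 0 ≤ β → 0 ≤ γ →
        α ^ 2 - β * Real.sqrt (1 - α ^ 2) = -α →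
        α ^ 2 + β ^ 2 + γ ^ 2 = 1 →
        ∀ lam : Fin 3 → ℂ,
          (∀ j, ‖-(α : ℂ) + (Real.sqrt (1 - α ^ 2) : ℝ) * lam j‖ = 1) →
          (∀ j, 1 - Real.sqrt 3 * γ ≤ ‖-(α : ℂ) - (β : ℂ) * lam j‖ ∧
                ‖-(α : ℂ) - (β : ℂ) * lam j‖ ≤ 1 + Real.sqrt 3 * γ) →
          lam 0 + lam 1 + lam 2 ≠ 0 := by
  refine ⟨0.4999, by norm_num, by norm_num, ?_⟩
  rintro α hα β γ - - hβ hγ lam h₁ h₂ hsum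
  set s := √(1 - α ^ 2)
  have hs : s ^ 2 = 1 - α ^ 2 := Real.sq_sqrt (by nlinarith [hα.1, hα.2])
  obtain ⟨hs_lb, hs_ub, hβ_lb, hγ_sq⟩ :=
    parameter_bounds hα (Real.sqrt_nonneg _) hs (by linarith) hγ
  have hδ : √3 * γ ≤ 1 / 20 := by
    have : (√3 * γ) ^ 2 = 3 * γ ^ 2 := by rw [mul_pow, Real.sq_sqrt zero_le_three]
    nlinarith
  have h₂' (j : Fin 3) : |‖-(α : ℂ) - β * lam j‖ - 1| ≤ √3 * γ :=
    abs_sub_le_iff.2 ⟨by linarith [h₂ j], by linarith [h₂ j]⟩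
  have him (j : Fin 3) : |(lam j).im| ∈ Set.Icc (9 / 10) (11 / 10) :=
    abs_im_mem_Icc_of_abs_re_le (by linarith [hα.1]) hα.2 hs_lb hs (h₁ j) <|
      abs_re_le_one_div_eight hα.1 hs_lb hs_ub hβ_lb hγ_sq hδ hs hγ (h₁ j) (h₂' j)
  exact add_add_ne_zero_of_abs_mem_Icc (by norm_num) _ him (by simpa using congrArg im hsum)
end

section
/- There exists a real number β₀ with 0 < β₀ < 1/3 such that the following holds for every β ∈ [β₀, 1/3]: there is no pair of functions u, v : {1,2,3,4} → 𝕋 satisfying the three equations (1−β)/3 · (u(1)+u(2)+u(3)) + β·u(4) = 0, (1−β)/3 · (v(1)+v(2)+v(3)) + β·v(4) = 0, and (1−β)/3 · (u(1)·conj(v(1)) + u(2)·conj(v(2)) + u(3)·conj(v(3))) + β·u(4)·conj(v(4)) = 0. -/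
/-!
Put `a j = conj (u 3) * u j` and `b j = conj (v 3) * v j`. Since `1, u, v` are orthonormal in
`L²(μ)`, Pythagoras gives `∫ |1 + conj (u 3) • u + conj (v 3) • v|² dμ = 3`. The fourth point alone
contributes `9 β`, so `(1 - β) / 3 * ∑ j < 3, |1 + a j + b j|² = 3 - 9 β`, which vanishes at
`β = 1/3`. Near `1/3` every `1 + a j + b j` is therefore small, which pins `a j` near a primitive
cube root of unity and forces `|Im (a j)| > 1/2`. But the first equation makes `∑ j < 3, a j`
real, and three reals of modulus in `(1/2, 1]` never sum to zero.
-/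

open ComplexConjugate

theorem Complex.norm_one_add_add_sq_of_norm_eq_one {a b : ℂ} (ha : ‖a‖ = 1) (hb : ‖b‖ = 1) :
    ‖1 + a + b‖ ^ 2 = 3 + 2 * (a + b + a * conj b).re := by
  rw [Complex.sq_norm, Complex.normSq_add, Complex.normSq_add, Complex.normSq_eq_norm_sq a,
    Complex.normSq_eq_norm_sq b, ha, hb, map_one, one_mul]
  simp only [add_mul, one_mul, Complex.add_re, Complex.conj_re]
  ring

theorem sum_mul_norm_one_add_mul_add_mul_sq_eq_three {ι : Type*} [Fintype ι] (μ : ι → ℝ)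
    {u v : ι → ℂ} (hu : ∀ i, ‖u i‖ = 1) (hv : ∀ i, ‖v i‖ = 1) (hμ : ∑ i, μ i = 1)
    (hu0 : ∑ i, (μ i : ℂ) * u i = 0) (hv0 : ∑ i, (μ i : ℂ) * v i = 0)
    (huv : ∑ i, (μ i : ℂ) * (u i * conj (v i)) = 0) {c d : ℂ} (hc : ‖c‖ = 1) (hd : ‖d‖ = 1) :
    ∑ i, μ i * ‖1 + c * u i + d * v i‖ ^ 2 = 3 := by
  have hterm : ∀ i, μ i * ‖1 + c * u i + d * v i‖ ^ 2
      = 3 * μ i + 2 * (c * ((μ i : ℂ) * u i) + d * ((μ i : ℂ) * v i)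
          + c * conj d * ((μ i : ℂ) * (u i * conj (v i)))).re := by
    intro i
    rw [Complex.norm_one_add_add_sq_of_norm_eq_one (by rw [norm_mul, hc, hu, one_mul])
      (by rw [norm_mul, hd, hv, one_mul])]
    have : c * ((μ i : ℂ) * u i) + d * ((μ i : ℂ) * v i)
          + c * conj d * ((μ i : ℂ) * (u i * conj (v i)))
        = (μ i : ℂ) * (c * u i + d * v i + c * u i * conj (d * v i)) := by
      rw [map_mul]; ring
    rw [this, Complex.re_ofReal_mul]
    ring
  simp only [hterm, Finset.sum_add_distrib, ← Finset.mul_sum, ← Complex.re_sum, hμ, hu0, hv0, huv]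
  simp

theorem Complex.half_lt_abs_im_of_norm_one_add_add_le {a b : ℂ} (ha : ‖a‖ = 1) (hb : ‖b‖ = 1)
    (h : ‖1 + a + b‖ ≤ 1 / 10) : 1 / 2 < |a.im| := by
  set e := 1 + a + b
  have ha2 : a.re ^ 2 + a.im ^ 2 = 1 := by
    have := Complex.sq_norm a
    rw [ha, Complex.normSq_apply] at this
    linear_combination -this
  have hre : 2 * a.re + 1 = 2 * (e * conj (1 + a)).re - ‖e‖ ^ 2 := by
    have hb' : ‖e - (1 + a)‖ ^ 2 = 1 := by simp [e, hb]
    simp only [Complex.sq_norm, Complex.normSq_apply, Complex.sub_re, Complex.sub_im,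
      Complex.add_re, Complex.add_im, Complex.one_re, Complex.one_im, Complex.mul_re, Complex.conj_re,
      Complex.conj_im] at hb' ⊢
    linear_combination hb' - ha2
  have hbound : |(e * conj (1 + a)).re| ≤ 2 / 10 := by
    refine (Complex.abs_re_le_norm _).trans ?_
    rw [norm_mul, Complex.norm_conj]
    have : ‖1 + a‖ ≤ 2 := (norm_add_le _ _).trans (by simp [ha]; norm_num)
    nlinarith [norm_nonneg e, norm_nonneg (1 + a)]
  have hre_sq : a.re ^ 2 < 3 / 4 := by
    have he : ‖e‖ ^ 2 ≤ 1 / 100 := by nlinarith [norm_nonneg e]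
    rw [abs_le] at hbound
    nlinarith [sq_nonneg (‖e‖)]
  have : (1 / 2) ^ 2 < a.im ^ 2 := by linarith
  simpa using sq_lt_sq.mp this

theorem add_add_ne_zero_of_abs_mem_Ioc {x y z : ℝ} (hx : |x| ∈ Set.Ioc (1 / 2) 1)
    (hy : |y| ∈ Set.Ioc (1 / 2) 1) (hz : |z| ∈ Set.Ioc (1 / 2) 1) : x + y + z ≠ 0 := by
  obtain ⟨hx₁, hx₂⟩ := hx
  obtain ⟨hy₁, hy₂⟩ := hy
  obtain ⟨hz₁, hz₂⟩ := hz
  rcases abs_cases x with ⟨hx, -⟩ | ⟨hx, -⟩ <;> rcases abs_cases y with ⟨hy, -⟩ | ⟨hy, -⟩ <;>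
    rcases abs_cases z with ⟨hz, -⟩ | ⟨hz, -⟩ <;> intro h <;> linarith

theorem Complex.sum_im_ne_zero_of_norm_one_add_add_le {a b : Fin 3 → ℂ} (ha : ∀ j, ‖a j‖ = 1)
    (hb : ∀ j, ‖b j‖ = 1) (h : ∀ j, ‖1 + a j + b j‖ ≤ 1 / 10) : ∑ j, (a j).im ≠ 0 := by
  have hmem : ∀ j, |(a j).im| ∈ Set.Ioc (1 / 2) 1 := fun j ↦
    ⟨half_lt_abs_im_of_norm_one_add_add_le (ha j) (hb j) (h j), (abs_im_le_norm _).trans_eq (ha j)⟩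
  rw [Fin.sum_univ_three]
  exact add_add_ne_zero_of_abs_mem_Ioc (hmem 0) (hmem 1) (hmem 2)

section FourPoint

variable {β : ℝ} {u v : Fin 4 → ℂ}

theorem sum_im_conj_mul_eq_zero (hβ : β < 1) (hu : ‖u 3‖ = 1)
    (hu0 : ((1 - β : ℝ) : ℂ) / 3 * (u 0 + u 1 + u 2) + (β : ℂ) * u 3 = 0) :
    ∑ j : Fin 3, (conj (u 3) * u j.castSucc).im = 0 := by
  have h : (((1 - β) / 3 : ℝ) : ℂ) * ∑ j : Fin 3, conj (u 3) * u j.castSucc = -β := by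
    have h33 : conj (u 3) * u 3 = 1 := by simp [Complex.conj_mul', hu]
    simp only [Fin.sum_univ_three]
    push_cast at hu0 ⊢
    linear_combination conj (u 3) * hu0 - β * h33
  have := congrArg Complex.im h
  rw [Complex.im_ofReal_mul, Complex.im_sum, Complex.neg_im, Complex.ofReal_im, neg_zero] at this
  exact (mul_eq_zero.mp this).resolve_left (by linarith)

theorem weighted_sum_norm_one_add_conj_mul_add_conj_mul_sq (hu : ∀ j, ‖u j‖ = 1)
    (hv : ∀ j, ‖v j‖ = 1)
    (hu0 : ((1 - β : ℝ) : ℂ) / 3 * (u 0 + u 1 + u 2) + (β : ℂ) * u 3 = 0)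
    (hv0 : ((1 - β : ℝ) : ℂ) / 3 * (v 0 + v 1 + v 2) + (β : ℂ) * v 3 = 0)
    (huv : ((1 - β : ℝ) : ℂ) / 3 * (u 0 * conj (v 0) + u 1 * conj (v 1) + u 2 * conj (v 2))
      + (β : ℂ) * (u 3 * conj (v 3)) = 0) :
    (1 - β) / 3 * ∑ j : Fin 3, ‖1 + conj (u 3) * u j.castSucc + conj (v 3) * v j.castSucc‖ ^ 2
      = 3 - 9 * β := by
  push_cast at hu0 hv0 huv
  have h := sum_mul_norm_one_add_mul_add_mul_sq_eq_three
    ![(1 - β) / 3, (1 - β) / 3, (1 - β) / 3, β] hu hv (by simp [Fin.sum_univ_four]; ring)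
    (by simp [Fin.sum_univ_four]; linear_combination hu0)
    (by simp [Fin.sum_univ_four]; linear_combination hv0)
    (by simp [Fin.sum_univ_four]; linear_combination huv)
    (Complex.norm_conj (u 3) ▸ hu 3) (Complex.norm_conj (v 3) ▸ hv 3)
  rw [Fin.sum_univ_castSucc] at h
  have h33 : conj (u 3) * u 3 = 1 := by simp [Complex.conj_mul', hu]
  have h33' : conj (v 3) * v 3 = 1 := by simp [Complex.conj_mul', hv]
  simp [Fin.sum_univ_three, h33, h33'] at h ⊢
  norm_num at h
  linarith

end FourPoint

/-- There is `0 < β₀ < 1/3` such that for every `β ∈ [β₀, 1/3]` there is no pair of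
unimodular functions `u, v` on the four point space satisfying
`∫ u dμ = ∫ v dμ = ∫ u·conj(v) dμ = 0` for the measure giving mass `(1-β)/3` to the first
three points and `β` to the fourth. -/
theorem exists_beta0_no_orthonormal_pair :
    ∃ β₀ : ℝ, 0 < β₀ ∧ β₀ < 1 / 3 ∧
      ∀ β ∈ Set.Icc β₀ (1 / 3 : ℝ),
        ¬ ∃ u v : Fin 4 → ℂ,
            (∀ j, ‖u j‖ = 1) ∧
            (∀ j, ‖v j‖ = 1) ∧
            ((1 - β : ℝ) : ℂ) / 3 * (u 0 + u 1 + u 2) + (β : ℂ) * u 3 = 0 ∧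
            ((1 - β : ℝ) : ℂ) / 3 * (v 0 + v 1 + v 2) + (β : ℂ) * v 3 = 0 ∧
            ((1 - β : ℝ) : ℂ) / 3 *
                (u 0 * (starRingEnd ℂ) (v 0) + u 1 * (starRingEnd ℂ) (v 1)
                  + u 2 * (starRingEnd ℂ) (v 2))
              + (β : ℂ) * (u 3 * (starRingEnd ℂ) (v 3)) = 0 := by
  -- each `‖1 + a j + b j‖ ^ 2 ≤ 9 / 2 * (3 - 9 * β) ≤ 27 / 20000 < 1 / 100`
  refine ⟨3333 / 10000, by norm_num, by norm_num, ?_⟩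
  rintro β ⟨hβ₀, hβ₁⟩ ⟨u, v, hu, hv, hu0, hv0, huv⟩
  set a : Fin 3 → ℂ := fun j ↦ conj (u 3) * u j.castSucc
  set b : Fin 3 → ℂ := fun j ↦ conj (v 3) * v j.castSucc
  have hsum : (1 - β) / 3 * ∑ j, ‖1 + a j + b j‖ ^ 2 = 3 - 9 * β :=
    weighted_sum_norm_one_add_conj_mul_add_conj_mul_sq hu hv hu0 hv0 huv
  have hsmall : ∀ j, ‖1 + a j + b j‖ ≤ 1 / 10 := fun j ↦ by
    have := Finset.single_le_sum (f := fun i ↦ ‖1 + a i + b i‖ ^ 2) (fun i _ ↦ sq_nonneg _)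
      (Finset.mem_univ j)
    nlinarith [norm_nonneg (1 + a j + b j)]
  exact Complex.sum_im_ne_zero_of_norm_one_add_add_le (fun j ↦ by simp [a, hu])
    (fun j ↦ by simp [b, hv]) hsmall (sum_im_conj_mul_eq_zero (by linarith) (hu 3) hu0)
end

section
/- Let A be a unital C*-algebra with a normalized trace τ, let n ≥ 1, and let p₁, …, pₙ ∈ A be projections with p_i·p_j = 0 for i ≠ j, p₁ + ⋯ + pₙ = 1, and τ(p_j) ≤ 1/2 for every j. Then there exists a unitary u ∈ A with τ(u) = 0. -/
/-!
Write `r j = τ (p j)`; positivity of `τ` makes these real numbers in `[0, 1/2]` with sum `1`.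
For unimodular scalars `c j`, `u = ∑ c j • p j` is unitary with `τ u = ∑ c j * r j`, so it
suffices to close a polygon with side lengths `r j`. Split the indices into a maximal set of
weight at most `1/2`, one further index, and the rest: the three weights satisfy the triangle
inequalities, and the intermediate value theorem yields a triangle with these side lengths.
-/

open scoped ComplexOrder

open Complex in
theorem exists_norm_eq_one_mul_add_add_mul_eq_zero {a b c : ℝ}
    (ha : a ≤ b + c) (hb : b ≤ a + c) (hc : c ≤ a + b) :
    ∃ x z : ℂ, ‖x‖ = 1 ∧ ‖z‖ = 1 ∧ a * x + b + c * z = 0 := by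
  set f : ℝ → ℝ := fun θ => ‖(b + c * exp (θ * I) : ℂ)‖
  have hf : Continuous f := by fun_prop
  have hπ : f Real.pi = |b - c| := by
    rw [← Real.norm_eq_abs, ← norm_real]
    simp [f, exp_pi_mul_I, sub_eq_add_neg]
  have h0 : f 0 = |b + c| := by
    rw [← Real.norm_eq_abs, ← norm_real]
    simp [f]
  have hmem : a ∈ Set.Icc (f Real.pi) (f 0) := by
    rw [hπ, h0]
    exact ⟨abs_sub_le_iff.2 ⟨by linarith, by linarith⟩, ha.trans (le_abs_self _)⟩
  obtain ⟨θ, -, hθ⟩ := intermediate_value_Icc' Real.pi_pos.le hf.continuousOn hmem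
  set w : ℂ := b + c * exp (θ * I)
  have hw : (a : ℂ) * exp (w.arg * I) = w := by
    conv_rhs => rw [← norm_mul_exp_arg_mul_I w]
    rw [show ‖w‖ = a from hθ]
  exact ⟨-exp (w.arg * I), exp (θ * I), by simp [norm_exp_ofReal_mul_I],
    norm_exp_ofReal_mul_I θ, by linear_combination -hw⟩

theorem exists_finset_two_mul_sum_le_lt {ι : Type*} [Fintype ι] [DecidableEq ι] (r : ι → ℝ)
    (hS : 0 < ∑ i, r i) :
    ∃ (s : Finset ι) (j : ι), j ∉ s ∧ 2 * ∑ i ∈ s, r i ≤ ∑ i, r i ∧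
      ∑ i, r i < 2 * (∑ i ∈ s, r i + r j) := by
  obtain ⟨s, hs, hmax⟩ := Finset.exists_max_image
    {s : Finset ι | 2 * ∑ i ∈ s, r i ≤ ∑ i, r i} Finset.card
    ⟨∅, by simpa using hS.le⟩
  rw [Finset.mem_filter_univ] at hs
  obtain ⟨j, hj⟩ : ∃ j, j ∉ s := by
    by_contra! h
    rw [Finset.eq_univ_of_forall h] at hs
    linarith
  refine ⟨s, j, hj, hs, lt_of_not_ge fun h => ?_⟩
  have := hmax (insert j s) (by rwa [Finset.mem_filter_univ, Finset.sum_insert hj, add_comm])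
  rw [Finset.card_insert_of_notMem hj] at this
  omega

theorem Finset.sum_eq_sum_add_add_sum_compl_erase {ι M : Type*} [Fintype ι] [DecidableEq ι]
    [AddCommMonoid M] {s : Finset ι} {j : ι} (hj : j ∉ s) (f : ι → M) :
    ∑ i, f i = ∑ i ∈ s, f i + f j + ∑ i ∈ sᶜ.erase j, f i := by
  rw [add_assoc, Finset.add_sum_erase _ _ (Finset.mem_compl.2 hj), Finset.sum_add_sum_compl]

theorem exists_norm_eq_one_sum_mul_eq_zero {ι : Type*} [Fintype ι] (r : ι → ℝ)
    (hr0 : ∀ i, 0 ≤ r i) (hr : ∀ i, 2 * r i ≤ ∑ j, r j) :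
    ∃ c : ι → ℂ, (∀ i, ‖c i‖ = 1) ∧ ∑ i, c i * r i = 0 := by
  classical
  rcases (Finset.sum_nonneg fun i (_ : i ∈ Finset.univ) => hr0 i).eq_or_lt with hS | hS
  · exact ⟨1, by simp, by simp [← Complex.ofReal_sum, ← hS]⟩
  obtain ⟨s, j, hj, hs, hsj⟩ := exists_finset_two_mul_sum_le_lt r hS
  have hsplit := Finset.sum_eq_sum_add_add_sum_compl_erase hj r
  obtain ⟨x, z, hx, hz, hxz⟩ := exists_norm_eq_one_mul_add_add_mul_eq_zero
    (a := ∑ i ∈ s, r i) (b := r j) (c := ∑ i ∈ sᶜ.erase j, r i)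
    (by linarith) (by linarith [hr j]) (by linarith)
  refine ⟨fun i => if i ∈ s then x else if i = j then 1 else z, fun i => ?_, ?_⟩
  · dsimp only
    split_ifs <;> simp [hx, hz]
  beta_reduce
  rw [Finset.sum_eq_sum_add_add_sum_compl_erase hj, if_neg hj, if_pos rfl]
  have hs' : ∑ i ∈ s, (if i ∈ s then x else if i = j then 1 else z) * r i
      = x * ∑ i ∈ s, r i := by
    rw [Complex.ofReal_sum, Finset.mul_sum]
    exact Finset.sum_congr rfl fun i hi => by rw [if_pos hi]
  have hrest : ∑ i ∈ sᶜ.erase j, (if i ∈ s then x else if i = j then 1 else z) * r i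
      = z * ∑ i ∈ sᶜ.erase j, r i := by
    rw [Complex.ofReal_sum, Finset.mul_sum]
    refine Finset.sum_congr rfl fun i hi => ?_
    obtain ⟨hij, his⟩ := Finset.mem_erase.1 hi
    rw [if_neg (Finset.mem_compl.1 his), if_neg hij]
  rw [hs', hrest]
  linear_combination hxz

section OrthogonalProjections

variable {R A ι : Type*} [CommSemiring R] [Semiring A] [Algebra R A] [Fintype ι] {p : ι → A}

theorem sum_smul_mul_sum_smul_of_orthogonal (hidem : ∀ j, p j * p j = p j)
    (horth : ∀ i j, i ≠ j → p i * p j = 0) (d e : ι → R) :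
    (∑ j, d j • p j) * (∑ j, e j • p j) = ∑ j, (d j * e j) • p j := by
  classical
  simp_rw [Finset.sum_mul_sum, smul_mul_smul_comm]
  refine Finset.sum_congr rfl fun i _ => ?_
  rw [Finset.sum_eq_single i (fun j _ hji => by rw [horth i j hji.symm, smul_zero])
    (absurd (Finset.mem_univ i)), hidem]

theorem sum_smul_mem_unitary [StarRing R] [StarRing A] [StarModule R A]
    (hsa : ∀ j, star (p j) = p j) (hidem : ∀ j, p j * p j = p j)
    (horth : ∀ i j, i ≠ j → p i * p j = 0) (hsum : ∑ j, p j = 1) {c : ι → R}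
    (hc : ∀ j, c j ∈ unitary R) :
    ∑ j, c j • p j ∈ unitary A := by
  have hstar : star (∑ j, c j • p j) = ∑ j, star (c j) • p j := by
    simp only [star_sum, star_smul, hsa]
  rw [Unitary.mem_iff, hstar, sum_smul_mul_sum_smul_of_orthogonal hidem horth,
    sum_smul_mul_sum_smul_of_orthogonal hidem horth]
  simp only [Unitary.star_mul_self_of_mem (hc _), Unitary.mul_star_self_of_mem (hc _), one_smul,
    hsum, and_self]

end OrthogonalProjections

theorem Complex.mem_unitary_of_norm_eq_one {z : ℂ} (hz : ‖z‖ = 1) : z ∈ unitary ℂ := by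
  rw [Unitary.mem_iff, Complex.star_def, Complex.conj_mul', Complex.mul_conj', hz]
  simp

theorem exists_trace_zero_unitary_of_small_projections_general
    (A : Type*) [NormedRing A] [StarRing A]
    [NormedAlgebra ℂ A] [StarModule ℂ A]
    (τ : A →ₗ[ℂ] ℂ) (hτ1 : τ 1 = 1)
    (hpos : ∀ a : A, 0 ≤ τ (star a * a))
    (n : ℕ) (p : Fin n → A)
    (hsa : ∀ j, star (p j) = p j)
    (hidem : ∀ j, p j * p j = p j)
    (horth : ∀ i j, i ≠ j → p i * p j = 0)
    (hsum : ∑ j, p j = 1)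
    (htr : ∀ j, τ (p j) ≤ (1 / 2 : ℂ)) :
    ∃ u : A, u ∈ unitary A ∧ τ u = 0 := by
  have hnonneg (j : Fin n) : 0 ≤ τ (p j) := by simpa [hsa j, hidem j] using hpos (p j)
  have hreal (j : Fin n) : τ (p j) = (τ (p j)).re :=
    Complex.eq_re_of_ofReal_le (by exact_mod_cast hnonneg j)
  have htotal : ∑ j, (τ (p j)).re = 1 := by
    rw [← Complex.re_sum, ← map_sum, hsum, hτ1, Complex.one_re]
  obtain ⟨c, hc, hc0⟩ := exists_norm_eq_one_sum_mul_eq_zero (fun j => (τ (p j)).re)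
    (fun j => (Complex.nonneg_iff.1 (hnonneg j)).1)
    (fun j => by
      have := (Complex.le_def.1 (htr j)).1
      norm_num at this
      linarith)
  refine ⟨∑ j, c j • p j, sum_smul_mem_unitary hsa hidem horth hsum
    fun j => Complex.mem_unitary_of_norm_eq_one (hc j), ?_⟩
  simp_rw [map_sum, map_smul, smul_eq_mul]
  simpa [← hreal] using hc0

/-- If a unital C*-algebra with a normalized trace contains mutually orthogonal
projections summing to `1`, each of trace at most `1/2`, then it contains a unitary of
trace zero. -/
theorem exists_trace_zero_unitary_of_small_projections
    (A : Type*) [NormedRing A] [StarRing A] [CStarRing A] [CompleteSpace A]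
    [NormedAlgebra ℂ A] [StarModule ℂ A]
    (τ : A →ₗ[ℂ] ℂ) (hτ1 : τ 1 = 1)
    (hpos : ∀ a : A, 0 ≤ τ (star a * a))
    (htrace : ∀ a b : A, τ (a * b) = τ (b * a))
    (n : ℕ) (hn : 1 ≤ n) (p : Fin n → A)
    (hsa : ∀ j, star (p j) = p j)
    (hidem : ∀ j, p j * p j = p j)
    (horth : ∀ i j, i ≠ j → p i * p j = 0)
    (hsum : ∑ j, p j = 1)
    (htr : ∀ j, τ (p j) ≤ (1 / 2 : ℂ)) :
    ∃ u : A, u ∈ unitary A ∧ τ u = 0 :=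
  exists_trace_zero_unitary_of_small_projections_general A τ hτ1 hpos n p hsa hidem horth hsum htr
end

section
/- Let A be a unital C*-algebra, let a ∈ A, and let u ∈ A be a unitary. Then dist(a, GL(A)) ≤ r(u·a); consequently dist(a, GL(A)) ≤ inf over unitaries u of r(u·a). -/
/-! If `k` lies outside the spectrum of `u a` for a unit `u`, then
`u⁻¹ (k - u a) = k u⁻¹ - a` is invertible, and it lies at distance `|k| ‖u⁻¹‖` from `a`.
Letting `|k|` decrease to `r(u a)` gives the bound whenever `‖u⁻¹‖ ≤ 1`, as for unitaries. -/

lemma isUnit_sub_smul_inv_of_spectralRadius_lt {𝕜 A : Type*} [NormedField 𝕜] [Ring A]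
    [Algebra 𝕜 A] (a : A) (u : Aˣ) {k : 𝕜} (hk : spectralRadius 𝕜 ((u : A) * a) < ‖k‖₊) :
    IsUnit (a - k • (↑u⁻¹ : A)) := by
  have hres : IsUnit (algebraMap 𝕜 A k - u * a) :=
    spectrum.mem_resolventSet_of_spectralRadius_lt hk
  have hprod : (↑u⁻¹ : A) * (algebraMap 𝕜 A k - u * a) = -(a - k • (↑u⁻¹ : A)) := by
    rw [mul_sub, Units.inv_mul_cancel_left, Algebra.algebraMap_eq_smul_one, mul_smul_comm,
      mul_one, neg_sub]
  simpa only [hprod, IsUnit.neg_iff] using u⁻¹.isUnit.mul hres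

lemma infEDist_setOf_isUnit_le_spectralRadius {𝕜 A : Type*} [RCLike 𝕜] [NormedRing A]
    [NormedAlgebra 𝕜 A] (a : A) (u : Aˣ) (hu : ‖(↑u⁻¹ : A)‖ ≤ 1) :
    Metric.infEDist a {x : A | IsUnit x} ≤ spectralRadius 𝕜 ((u : A) * a) := by
  refine le_of_forall_gt_imp_ge_of_dense fun c hc => ?_
  obtain ⟨r, hr, hrc⟩ := ENNReal.lt_iff_exists_nnreal_btwn.mp hc
  have hk : ‖((r : ℝ) : 𝕜)‖₊ = r := by ext; simp
  have hunit := isUnit_sub_smul_inv_of_spectralRadius_lt (𝕜 := 𝕜) a u (hk ▸ hr)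
  calc Metric.infEDist a {x : A | IsUnit x}
      ≤ edist a (a - ((r : ℝ) : 𝕜) • (↑u⁻¹ : A)) := Metric.infEDist_le_edist_of_mem hunit
    _ = ‖((r : ℝ) : 𝕜) • (↑u⁻¹ : A)‖₊ := by
        rw [edist_eq_enorm_sub, sub_sub_cancel, enorm_eq_nnnorm]
    _ ≤ r := by
        rw [ENNReal.coe_le_coe, nnnorm_smul, hk]
        exact mul_le_of_le_one_right r.2 hu
    _ ≤ c := hrc.le

lemma CStarRing.norm_coe_unitary_le_one {E : Type*} [NormedRing E] [StarRing E] [CStarRing E]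
    (U : unitary E) : ‖(U : E)‖ ≤ 1 := by
  rcases subsingleton_or_nontrivial E with hE | hE
  · simp [Subsingleton.elim (U : E) 0]
  · exact (CStarRing.norm_coe_unitary U).le

theorem infEdist_invertibles_le_spectralRadius_unitary_mul_general
    (A : Type*) [NormedRing A] [StarRing A] [CStarRing A]
    [NormedAlgebra ℂ A] (a : A) (u : unitary A) :
    EMetric.infEdist a {x : A | IsUnit x} ≤ spectralRadius ℂ ((u : A) * a) ∧
    EMetric.infEdist a {x : A | IsUnit x}
      ≤ ⨅ (w : unitary A), spectralRadius ℂ ((w : A) * a) := by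
  have key (w : unitary A) :
      Metric.infEDist a {x : A | IsUnit x} ≤ spectralRadius ℂ ((w : A) * a) :=
    infEDist_setOf_isUnit_le_spectralRadius a (Unitary.toUnits w)
      (CStarRing.norm_coe_unitary_le_one (star w))
  exact ⟨key u, le_iInf key⟩

/-- In a unital C*-algebra, for every unitary `u` the distance from `a` to the invertibles
is at most the spectral radius `r(u a)`; consequently it is at most the infimum of
`r(u a)` over unitaries `u`. -/
theorem infEdist_invertibles_le_spectralRadius_unitary_mul
    (A : Type*) [NormedRing A] [StarRing A] [CStarRing A] [CompleteSpace A]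
    [NormedAlgebra ℂ A] [StarModule ℂ A] (a : A) (u : unitary A) :
    EMetric.infEdist a {x : A | IsUnit x} ≤ spectralRadius ℂ ((u : A) * a) ∧
    EMetric.infEdist a {x : A | IsUnit x}
      ≤ ⨅ (w : unitary A), spectralRadius ℂ ((w : A) * a) :=
  infEdist_invertibles_le_spectralRadius_unitary_mul_general A a u
end
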